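/- arXiv:1608.03241 — 5 statements merged into one kernel-verified Lean document; each statement's English description precedes it below -/
import Mathlib

section
/- Let r ≥ 2 and let H be a connected r-uniform hypergraph on n vertices with at least n hyperedges. Then for every vertex v of H, either there exists a Berge path of length r+1 starting from v, or there exists a Berge cycle of length r+1 having v as one of its vertices. -/
/-- A Berge path of length `k` in the hypergraph with edge collection `H`:
`k` distinct hyperedges `e 0, …, e (k-1)` and `k+1` distinct vertices
`v 0, …, v k` such that `v i, v (i+1) ∈ e i` for all `0 ≤ i < k`.
The path starts at `v 0`. -/
def IsBergePath {V : Type*} (H : Finset (Finset V)) (k : ℕ)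
    (e : Fin k → Finset V) (v : Fin (k + 1) → V) : Prop :=
  Function.Injective e ∧ Function.Injective v ∧ (∀ i, e i ∈ H) ∧
    ∀ i : Fin k, v i.castSucc ∈ e i ∧ v i.succ ∈ e i

/-- A Berge cycle of length `k` in the hypergraph with edge collection `H`:
`k` distinct hyperedges `e 0, …, e (k-1)` and `k` distinct vertices
`v 0, …, v (k-1)` such that `v i, v ((i+1) mod k) ∈ e i` for all `0 ≤ i < k`. -/
def IsBergeCycle {V : Type*} (H : Finset (Finset V)) (k : ℕ)
    (e : Fin k → Finset V) (v : Fin k → V) : Prop :=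
  Function.Injective e ∧ Function.Injective v ∧ (∀ i, e i ∈ H) ∧
    ∀ i : Fin k, v i ∈ e i ∧ v ⟨(i.val + 1) % k, Nat.mod_lt _ i.pos⟩ ∈ e i

/-- A hypergraph is connected if between any two of its vertices there is a Berge path. -/
def HypergraphConnected {V : Type*} (H : Finset (Finset V)) : Prop :=
  ∀ u w : V, ∃ (k : ℕ) (e : Fin k → Finset V) (p : Fin (k + 1) → V),
    IsBergePath H k e p ∧ p 0 = u ∧ p (Fin.last k) = w

namespace BergeAux

variable {V : Type*}

/-- ℕ-indexed Berge path of length `k`. -/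
def NPath (H : Finset (Finset V)) (k : ℕ) (e : ℕ → Finset V) (p : ℕ → V) : Prop :=
  (∀ i j, i < j → j < k → e i ≠ e j) ∧
  (∀ i j, i < j → j ≤ k → p i ≠ p j) ∧
  (∀ i, i < k → e i ∈ H) ∧
  (∀ i, i < k → p i ∈ e i ∧ p (i + 1) ∈ e i)

/-- ℕ-indexed Berge cycle of length `k`. -/
def NCycle (H : Finset (Finset V)) (k : ℕ) (e : ℕ → Finset V) (p : ℕ → V) : Prop :=
  (∀ i j, i < j → j < k → e i ≠ e j) ∧
  (∀ i j, i < j → j < k → p i ≠ p j) ∧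
  (∀ i, i < k → e i ∈ H) ∧
  (∀ i, i < k → p i ∈ e i ∧ p ((i + 1) % k) ∈ e i)

theorem NPath.isBergePath {H : Finset (Finset V)} {k : ℕ} {e : ℕ → Finset V} {p : ℕ → V}
    (h : NPath H k e p) :
    IsBergePath H k (fun i => e i.val) (fun i => p i.val) := by
  obtain ⟨he, hp, heH, hm⟩ := h
  refine ⟨?_, ?_, fun i => heH _ i.isLt, fun i => ?_⟩
  · intro a b hab
    rcases Nat.lt_trichotomy a.val b.val with h1 | h1 | h1
    · exact absurd hab (he _ _ h1 b.isLt)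
    · exact Fin.ext h1
    · exact absurd hab.symm (he _ _ h1 a.isLt)
  · intro a b hab
    rcases Nat.lt_trichotomy a.val b.val with h1 | h1 | h1
    · exact absurd hab (hp _ _ h1 (by omega))
    · exact Fin.ext h1
    · exact absurd hab.symm (hp _ _ h1 (by omega))
  · have := hm i.val i.isLt
    simpa [Fin.castSucc, Fin.succ] using this

theorem NCycle.isBergeCycle {H : Finset (Finset V)} {k : ℕ} {e : ℕ → Finset V} {p : ℕ → V}
    (h : NCycle H k e p) :
    IsBergeCycle H k (fun i => e i.val) (fun i => p i.val) := by
  obtain ⟨he, hp, heH, hm⟩ := h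
  refine ⟨?_, ?_, fun i => heH _ i.isLt, fun i => ?_⟩
  · intro a b hab
    rcases Nat.lt_trichotomy a.val b.val with h1 | h1 | h1
    · exact absurd hab (he _ _ h1 b.isLt)
    · exact Fin.ext h1
    · exact absurd hab.symm (he _ _ h1 a.isLt)
  · intro a b hab
    rcases Nat.lt_trichotomy a.val b.val with h1 | h1 | h1
    · exact absurd hab (hp _ _ h1 b.isLt)
    · exact Fin.ext h1
    · exact absurd hab.symm (hp _ _ h1 a.isLt)
  · exact hm i.val i.isLt

theorem NPath.mono {H H' : Finset (Finset V)} {k : ℕ} {e : ℕ → Finset V} {p : ℕ → V}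
    (h : NPath H k e p) (hsub : H ⊆ H') : NPath H' k e p :=
  ⟨h.1, h.2.1, fun i hi => hsub (h.2.2.1 i hi), h.2.2.2⟩

theorem NCycle.mono {H H' : Finset (Finset V)} {k : ℕ} {e : ℕ → Finset V} {p : ℕ → V}
    (h : NCycle H k e p) (hsub : H ⊆ H') : NCycle H' k e p :=
  ⟨h.1, h.2.1, fun i hi => hsub (h.2.2.1 i hi), h.2.2.2⟩

theorem NPath.trunc {H : Finset (Finset V)} {k m : ℕ} {e : ℕ → Finset V} {p : ℕ → V}
    (h : NPath H k e p) (hm : m ≤ k) : NPath H m e p :=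
  ⟨fun i j hij hj => h.1 i j hij (by omega), fun i j hij hj => h.2.1 i j hij (by omega),
   fun i hi => h.2.2.1 i (by omega), fun i hi => h.2.2.2 i (by omega)⟩

/-- Convert a `Fin`-indexed Berge path into an ℕ-indexed one. -/
theorem isBergePath_nPath {H : Finset (Finset V)} {k : ℕ} {e : Fin k → Finset V}
    {p : Fin (k+1) → V} (h : IsBergePath H k e p) :
    NPath H k (fun n => if hn : n < k then e ⟨n, hn⟩ else ∅)
      (fun n => p ⟨min n k, by omega⟩) := by
  obtain ⟨he, hp, heH, hm⟩ := h
  refine ⟨?_, ?_, ?_, ?_⟩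
  · intro i j hij hj hcon
    simp only [dif_pos (show i < k by omega), dif_pos hj] at hcon
    have := congrArg Fin.val (he hcon)
    simp at this; omega
  · intro i j hij hj hcon
    simp only at hcon
    have := congrArg Fin.val (hp hcon)
    simp at this; omega
  · intro i hi; simp only [dif_pos hi]; exact heH _
  · intro i hi
    simp only [dif_pos hi]
    have := hm ⟨i, hi⟩
    constructor
    · have h1 : (⟨min i (k), by omega⟩ : Fin (k+1)) = (⟨i, hi⟩ : Fin k).castSucc := by
        apply Fin.ext; simp [Fin.castSucc]; omega
      rw [h1]; exact this.1
    · have h1 : (⟨min (i+1) k, by omega⟩ : Fin (k+1)) = (⟨i, hi⟩ : Fin k).succ := by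
        apply Fin.ext; simp [Fin.succ]; omega
      rw [h1]; exact this.2

end BergeAux
namespace BergeAux
variable {V : Type*}

theorem add_one_mod (a k : ℕ) : (a + 1) % k = (a % k + 1) % k := by
  conv_lhs => rw [Nat.add_mod]
  conv_rhs => rw [Nat.add_mod]
  rw [Nat.mod_mod_of_dvd _ dvd_rfl]

/-- Splicing a prefix of one Berge path (edges `0..j`) with a second Berge path
starting at a vertex of edge `j`. -/
theorem NPath.splice {H : Finset (Finset V)} {k₁ k₂ : ℕ} (j : ℕ) {e₁ e₂ : ℕ → Finset V}
    {p₁ p₂ : ℕ → V} (h₁ : NPath H k₁ e₁ p₁) (h₂ : NPath H k₂ e₂ p₂)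
    (hj : j < k₁) (hx : p₂ 0 ∈ e₁ j)
    (hvd : ∀ a b, a ≤ j → b ≤ k₂ → p₁ a ≠ p₂ b)
    (hed : ∀ a b, a ≤ j → b < k₂ → e₁ a ≠ e₂ b) :
    NPath H (j+1+k₂) (fun n => if n ≤ j then e₁ n else e₂ (n - (j+1)))
      (fun n => if n ≤ j then p₁ n else p₂ (n - (j+1))) := by
  obtain ⟨he₁, hp₁, heH₁, hm₁⟩ := h₁
  obtain ⟨he₂, hp₂, heH₂, hm₂⟩ := h₂
  refine ⟨?_, ?_, ?_, ?_⟩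
  · intro a b hab hb
    by_cases ha' : a ≤ j <;> by_cases hb' : b ≤ j <;>
      simp only [ha', hb', if_true, if_false, if_pos, if_neg]
    · exact he₁ a b hab (by omega)
    · exact hed a (b - (j+1)) ha' (by omega)
    · omega
    · have : a - (j+1) < b - (j+1) := by omega
      exact he₂ _ _ this (by omega)
  · intro a b hab hb
    by_cases ha' : a ≤ j <;> by_cases hb' : b ≤ j <;>
      simp only [ha', hb', if_true, if_false, if_pos, if_neg]
    · exact hp₁ a b hab (by omega)
    · exact hvd a (b - (j+1)) ha' (by omega)
    · omega
    · have : a - (j+1) < b - (j+1) := by omega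
      exact hp₂ _ _ this (by omega)
  · intro i hi
    by_cases hi' : i ≤ j <;> simp only [hi', if_true, if_false, if_pos, if_neg]
    · exact heH₁ i (by omega)
    · exact heH₂ _ (by omega)
  · intro i hi
    rcases Nat.lt_trichotomy i j with h1 | h1 | h1
    · simp only [show i ≤ j by omega, if_true, show i + 1 ≤ j by omega]
      exact hm₁ i (by omega)
    · subst h1
      simp only [le_refl, if_true, show ¬ (i+1 ≤ i) by omega, if_false]
      have : i + 1 - (i+1) = 0 := by omega
      rw [this]
      exact ⟨(hm₁ i (by omega)).1, hx⟩
    · simp only [show ¬ (i ≤ j) by omega, show ¬ (i+1 ≤ j) by omega, if_false]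
      have h2 : i + 1 - (j+1) = (i - (j+1)) + 1 := by omega
      rw [h2]
      exact hm₂ _ (by omega)

/-- Prepend a vertex to a Berge path via a fresh edge. -/
theorem NPath.cons {H : Finset (Finset V)} {k : ℕ} {e : ℕ → Finset V} {p : ℕ → V}
    (h : NPath H k e p) {a : V} {f : Finset V} (hfH : f ∈ H) (haf : a ∈ f)
    (hpf : p 0 ∈ f) (hfresh : ∀ b, b ≤ k → a ≠ p b) (hefresh : ∀ b, b < k → f ≠ e b) :
    NPath H (k+1) (fun n => if n = 0 then f else e (n-1))
      (fun n => if n = 0 then a else p (n-1)) := by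
  obtain ⟨he, hp, heH, hm⟩ := h
  refine ⟨?_, ?_, ?_, ?_⟩
  · intro i j hij hj
    by_cases hi' : i = 0 <;> simp only [hi', if_true, if_false, if_pos, if_neg,
      show j ≠ 0 by omega]
    · exact hefresh (j-1) (by omega)
    · exact he _ _ (by omega) (by omega)
  · intro i j hij hj
    by_cases hi' : i = 0 <;> simp only [hi', if_true, if_false, if_pos, if_neg,
      show j ≠ 0 by omega]
    · exact hfresh (j-1) (by omega)
    · exact hp _ _ (by omega) (by omega)
  · intro i hi
    by_cases hi' : i = 0 <;> simp only [hi', if_true, if_false, if_pos, if_neg]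
    · exact hfH
    · exact heH _ (by omega)
  · intro i hi
    by_cases hi' : i = 0
    · subst hi'
      simp only [if_pos rfl, if_neg (by omega : (0:ℕ)+1 ≠ 0)]
      exact ⟨haf, hpf⟩
    · simp only [if_neg hi', if_neg (by omega : i+1 ≠ 0)]
      have h2 : i + 1 - 1 = (i - 1) + 1 := by omega
      rw [h2]
      exact hm _ (by omega)

/-- Unrolling a Berge cycle of length `k` from position `i₀` gives a Berge path
of length `k-1`. -/
theorem NCycle.unroll {H : Finset (Finset V)} {k : ℕ} {e : ℕ → Finset V} {p : ℕ → V}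
    (h : NCycle H k e p) (i₀ : ℕ) (hk : 0 < k) :
    NPath H (k-1) (fun n => e ((i₀ + n) % k)) (fun n => p ((i₀ + n) % k)) := by
  obtain ⟨he, hp, heH, hm⟩ := h
  have hcancel : ∀ a b : ℕ, a < k → b < k → (i₀ + a) % k = (i₀ + b) % k → a = b := by
    intro a b ha hb hab
    have h1 : a ≡ b [MOD k] := Nat.ModEq.add_left_cancel' i₀ hab
    have := h1.eq_of_lt_of_lt ha hb
    exact this
  refine ⟨?_, ?_, ?_, ?_⟩
  · intro a b hab hb
    have h1 : (i₀ + a) % k ≠ (i₀ + b) % k := fun hc => by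
      have := hcancel a b (by omega) (by omega) hc; omega
    rcases Nat.lt_trichotomy ((i₀ + a) % k) ((i₀ + b) % k) with h2 | h2 | h2
    · exact he _ _ h2 (Nat.mod_lt _ hk)
    · exact absurd h2 h1
    · exact fun hc => he _ _ h2 (Nat.mod_lt _ hk) hc.symm
  · intro a b hab hb
    have h1 : (i₀ + a) % k ≠ (i₀ + b) % k := fun hc => by
      have := hcancel a b (by omega) (by omega) hc; omega
    rcases Nat.lt_trichotomy ((i₀ + a) % k) ((i₀ + b) % k) with h2 | h2 | h2
    · exact hp _ _ h2 (Nat.mod_lt _ hk)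
    · exact absurd h2 h1
    · exact fun hc => hp _ _ h2 (Nat.mod_lt _ hk) hc.symm
  · intro i hi; exact heH _ (Nat.mod_lt _ hk)
  · intro i hi
    refine ⟨(hm _ (Nat.mod_lt _ hk)).1, ?_⟩
    have h2 : (i₀ + (i+1)) % k = ((i₀ + i) % k + 1) % k := by
      rw [show i₀ + (i+1) = (i₀ + i) + 1 by ring, add_one_mod]
    show p ((i₀ + (i+1)) % k) ∈ e ((i₀ + i) % k)
    rw [h2]
    exact (hm _ (Nat.mod_lt _ hk)).2

/-- Existential ℕ-indexed version of a `Fin`-indexed Berge path. -/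
theorem exists_nPath {H : Finset (Finset V)} {k : ℕ} {e : Fin k → Finset V}
    {p : Fin (k+1) → V} (h : IsBergePath H k e p) :
    ∃ e' p', NPath H k e' p' ∧ p' 0 = p 0 ∧ p' k = p (Fin.last k) := by
  refine ⟨_, _, isBergePath_nPath h, ?_, ?_⟩
  · exact congrArg p (Fin.ext (by simp))
  · exact congrArg p (Fin.ext (by simp [Fin.last]))

theorem NPath.mem_support {H : Finset (Finset V)} {k : ℕ} {e : ℕ → Finset V} {p : ℕ → V}
    (h : NPath H k e p) (hk : 1 ≤ k) {W : Finset V} (hW : ∀ f ∈ H, f ⊆ W) :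
    ∀ i, i ≤ k → p i ∈ W := by
  intro i hi
  rcases Nat.eq_zero_or_pos i with h0 | h0
  · subst h0
    exact hW _ (h.2.2.1 0 (by omega)) (h.2.2.2 0 (by omega)).1
  · have h2 : i = (i-1) + 1 := by omega
    rw [h2]
    exact hW _ (h.2.2.1 (i-1) (by omega)) (h.2.2.2 (i-1) (by omega)).2

end BergeAux
namespace BergeAux
variable {V : Type*}

/-- A directed path in the successor digraph of a matching `ψ`. -/
def DP (ψ : V → Finset V) (v : V) (t : ℕ) (d : ℕ → V) : Prop :=
  d 0 = v ∧ (∀ i j, i < j → j ≤ t → d i ≠ d j) ∧ ∀ i, i < t → d (i+1) ∈ ψ (d i)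

set_option maxHeartbeats 3200000 in
theorem core [Fintype V] [DecidableEq V]
    {r : ℕ} (hr : 2 ≤ r) {H : Finset (Finset V)} {W : Finset V}
    (hsub : ∀ f ∈ H, f ⊆ W)
    (ψ : V → Finset V)
    (hψH : ∀ x ∈ W, ψ x ∈ H)
    (hψself : ∀ x ∈ W, x ∈ ψ x)
    (hψcard : ∀ x ∈ W, (ψ x).card = r)
    (hψinj : ∀ x ∈ W, ∀ y ∈ W, ψ x = ψ y → x = y)
    {v : V} (hv : v ∈ W) :
    (∃ e p, NPath H (r+1) e p ∧ p 0 = v) ∨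
    (∃ e c, NCycle H (r+1) e c ∧ ∃ i, i < r+1 ∧ c i = v) := by
  -- vertices of a DP lie in W
  have hDPW : ∀ t d, DP ψ v t d → ∀ i, i ≤ t → d i ∈ W := by
    intro t d ⟨h0, hinj, harc⟩ i hi
    induction i with
    | zero => rw [h0]; exact hv
    | succ n ih =>
      have hn : d n ∈ W := ih (by omega)
      exact hsub _ (hψH _ hn) (harc n (by omega))
  -- a DP gives an NPath with matched edges
  have hDPpath : ∀ t d, DP ψ v t d → NPath H t (fun n => ψ (d n)) d := by
    intro t d hdp
    obtain ⟨h0, hinj, harc⟩ := hdp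
    have hW : ∀ i, i ≤ t → d i ∈ W := hDPW t d ⟨h0, hinj, harc⟩
    refine ⟨?_, hinj, ?_, ?_⟩
    · intro i j hij hj hcon
      exact hinj i j hij (by omega) (hψinj _ (hW i (by omega)) _ (hW j (by omega)) hcon)
    · intro i hi; exact hψH _ (hW i (by omega))
    · intro i hi
      exact ⟨hψself _ (hW i (by omega)), harc i hi⟩
  classical
  -- the maximum length of a DP from v
  set P : ℕ → Prop := fun t => ∃ d, DP ψ v t d with hP
  have hP0 : P 0 := ⟨fun _ => v, rfl, fun i j hij hj => by omega, fun i hi => by omega⟩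
  have hbound : ∀ t, P t → t < Fintype.card V := by
    rintro t ⟨d, h0, hinj, harc⟩
    have h1 : ((Finset.range (t+1)).image d).card = t + 1 := by
      rw [Finset.card_image_of_injOn, Finset.card_range]
      intro a ha b hb hab
      simp only [Finset.mem_coe, Finset.mem_range] at ha hb
      by_contra hne
      rcases Nat.lt_or_ge a b with h2 | h2
      · exact hinj a b h2 (by omega) hab
      · exact hinj b a (by omega) (by omega) hab.symm
    have h2 : ((Finset.range (t+1)).image d).card ≤ Fintype.card V :=
      Finset.card_le_univ _
    omega
  set t : ℕ := Nat.findGreatest P (Fintype.card V) with ht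
  have htP : P t := Nat.findGreatest_spec (m := 0) (by omega) hP0
  have htmax : ∀ s, t < s → ¬ P s := by
    intro s hs hPs
    rcases Nat.lt_or_ge s (Fintype.card V + 1) with h1 | h1
    · exact Nat.findGreatest_is_greatest hs (by omega) hPs
    · have := hbound s hPs; omega
  obtain ⟨d, hdp⟩ := htP
  have hdW : ∀ i, i ≤ t → d i ∈ W := hDPW t d hdp
  obtain ⟨hd0, hdinj', harc⟩ := hdp
  have hdinj : ∀ a b, a ≤ t → b ≤ t → d a = d b → a = b := by
    intro a b ha hb hab
    by_contra hne
    rcases Nat.lt_or_ge a b with h2 | h2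
    · exact hdinj' a b h2 (by omega) hab
    · exact hdinj' b a (by omega) (by omega) hab.symm
  -- the last edge of ANY maximal DP is stuck inside the path
  have hstuckGen : ∀ d', DP ψ v t d' → ∀ w ∈ ψ (d' t), ∃ i, i ≤ t ∧ d' i = w := by
    intro d' ⟨hd0', hdinj'', harc'⟩ w hw
    by_contra hcon
    push_neg at hcon
    apply htmax (t+1) (by omega)
    refine ⟨fun n => if n ≤ t then d' n else w, ?_, ?_, ?_⟩
    · simp only [if_pos (by omega : 0 ≤ t)]; exact hd0'
    · intro i j hij hj
      by_cases hi' : i ≤ t <;> by_cases hj' : j ≤ t <;>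
        simp only [hi', hj', if_true, if_false, if_pos, if_neg]
      · exact hdinj'' i j hij hj'
      · exact fun hc => hcon i hi' hc
      · omega
      · omega
    · intro i hi
      by_cases hi' : i + 1 ≤ t
      · simp only [if_pos hi', if_pos (by omega : i ≤ t)]
        exact harc' i (by omega)
      · have hit : i = t := by omega
        subst hit
        simp only [if_neg hi', if_pos (le_refl t)]
        exact hw
  have hstuck : ∀ w ∈ ψ (d t), ∃ i, i ≤ t ∧ d i = w :=
    hstuckGen d ⟨hd0, hdinj', harc⟩
  -- the last edge has ≤ t+1 vertices, so r ≤ t+1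
  have hrt : r ≤ t + 1 := by
    have h1 : ψ (d t) ⊆ (Finset.range (t+1)).image d := by
      intro w hw
      obtain ⟨i, hi, hdi⟩ := hstuck w hw
      exact Finset.mem_image.mpr ⟨i, Finset.mem_range.mpr (by omega), hdi⟩
    have h2 := Finset.card_le_card h1
    have h3 := Finset.card_image_le (f := d) (s := Finset.range (t+1))
    rw [hψcard _ (hdW t le_rfl)] at h2
    rw [Finset.card_range] at h3
    omega
  -- long path case
  rcases Nat.lt_or_ge r t with hlong | hshort
  · -- t ≥ r+1 : truncate to a path of length r+1
    left
    exact ⟨_, _, (hDPpath t d ⟨hd0, hdinj', harc⟩).trunc (by omega), hd0⟩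
  -- now t = r-1 or t = r
  rcases Nat.lt_or_ge t r with hA | hB
  · -- Case A : t + 1 = r
    have htr : t + 1 = r := by omega
    have ht1 : 1 ≤ t := by omega
    set U₀ : Finset V := (Finset.range (t+1)).image d with hU₀
    have hdU₀ : ∀ i, i ≤ t → d i ∈ U₀ := fun i hi =>
      Finset.mem_image.mpr ⟨i, Finset.mem_range.mpr (by omega), rfl⟩
    have hU₀card : U₀.card = t + 1 := by
      rw [hU₀, Finset.card_image_of_injOn, Finset.card_range]
      intro a ha b hb hab
      simp only [Finset.mem_coe, Finset.mem_range] at ha hb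
      exact hdinj a b (by omega) (by omega) hab
    have hlast : ψ (d t) = U₀ := by
      apply Finset.eq_of_subset_of_card_le
      · intro w hw
        obtain ⟨i, hi, hdi⟩ := hstuck w hw
        exact hdi ▸ hdU₀ i hi
      · rw [hU₀card, hψcard _ (hdW t le_rfl)]; omega
    by_cases hwex : ∃ w ∈ ψ (d (t-1)), w ∉ U₀
    · obtain ⟨w, hw1, hw2⟩ := hwex
      have hwW : w ∈ W := hsub _ (hψH _ (hdW (t-1) (by omega))) hw1
      have hwd : ∀ i, i ≤ t → d i ≠ w := fun i hi hc => hw2 (hc ▸ hdU₀ i hi)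
      -- the alternative DP ending at w
      have hdp' : DP ψ v t (fun n => if n ≤ t - 1 then d n else w) := by
        refine ⟨?_, ?_, ?_⟩
        · simp only [if_pos (by omega : 0 ≤ t - 1)]; exact hd0
        · intro i j hij hj
          by_cases hi' : i ≤ t - 1 <;> by_cases hj' : j ≤ t - 1 <;>
            simp only [hi', hj', if_true, if_false, if_pos, if_neg]
          · exact hdinj' i j hij (by omega)
          · exact hwd i (by omega)
          · omega
          · omega
        · intro i hi
          by_cases hi' : i + 1 ≤ t - 1
          · simp only [if_pos hi', if_pos (by omega : i ≤ t - 1)]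
            exact harc i (by omega)
          · have hit : i = t - 1 := by omega
            subst hit
            simp only [if_neg hi', if_pos (le_refl (t-1))]
            exact hw1
      have hstuck' := hstuckGen _ hdp'
      simp only [if_neg (by omega : ¬ (t ≤ t - 1))] at hstuck'
      set U₁ : Finset V := insert w ((Finset.range t).image d) with hU₁
      have hU₁card : U₁.card = t + 1 := by
        rw [hU₁, Finset.card_insert_of_notMem, Finset.card_image_of_injOn,
          Finset.card_range]
        · intro a ha b hb hab
          simp only [Finset.mem_coe, Finset.mem_range] at ha hb
          exact hdinj a b (by omega) (by omega) hab
        · intro hc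
          obtain ⟨i, hi, hdi⟩ := Finset.mem_image.mp hc
          exact hwd i (by simp at hi; omega) hdi
      have hψw : ψ w = U₁ := by
        apply Finset.eq_of_subset_of_card_le
        · intro y hy
          obtain ⟨i, hi, hdi⟩ := hstuck' y hy
          by_cases hi' : i ≤ t - 1
          · simp only [if_pos hi'] at hdi
            exact hdi ▸ Finset.mem_insert_of_mem
              (Finset.mem_image.mpr ⟨i, Finset.mem_range.mpr (by omega), rfl⟩)
          · simp only [if_neg hi'] at hdi
            exact hdi ▸ Finset.mem_insert_self w _
        · rw [hU₁card, hψcard _ hwW]; omega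
      -- build the Berge cycle of length r+1 = t+2 through v
      right
      refine ⟨fun n => if n + 2 ≤ t then ψ (d n) else if n + 1 = t then ψ (d t)
        else if n = t then ψ (d (t-1)) else ψ w,
        fun n => if n ≤ t then d n else w, ?_, 0, by omega, ?_⟩
      swap
      · simp only [if_pos (by omega : 0 ≤ t)]; exact hd0
      have hrw : r + 1 = t + 2 := by omega
      rw [hrw]
      have hargW : ∀ i, i ≤ t → d i ∈ W := hdW
      -- injectivity of edges via the distinct ψ-arguments
      have hψd : ∀ a b, a ≤ t → b ≤ t → ψ (d a) = ψ (d b) → a = b := fun a b ha hb hab =>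
        hdinj a b ha hb (hψinj _ (hargW a ha) _ (hargW b hb) hab)
      have hψdw : ∀ a, a ≤ t → ψ (d a) ≠ ψ w := fun a ha hc =>
        hwd a ha (hψinj _ (hargW a ha) _ hwW hc)
      refine ⟨?_, ?_, ?_, ?_⟩
      · intro i j hij hj
        beta_reduce
        split_ifs <;>
          first
            | omega
            | (intro hc; first
                | (exact absurd (hψd _ _ (by omega) (by omega) hc) (by omega))
                | (exact hψdw _ (by omega) hc)
                | (exact hψdw _ (by omega) hc.symm))
      · intro i j hij hj
        beta_reduce
        split_ifs with h1 h2
        · exact hdinj' i j hij h2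
        · exact hwd i h1
        · omega
        · omega
      · intro i hi
        beta_reduce
        split_ifs <;>
          first
            | exact hψH _ (hdW _ (by omega))
            | exact hψH _ hwW
      · intro i hi
        by_cases h1 : i + 2 ≤ t
        · have hmod : (i+1) % (t+2) = i+1 := Nat.mod_eq_of_lt (by omega)
          simp only [hmod, if_pos (show i ≤ t by omega), if_pos (show i+1 ≤ t by omega),
            if_pos h1]
          exact ⟨hψself _ (hargW i (by omega)), harc i (by omega)⟩
        · by_cases h2 : i + 1 = t
          · have hmod : (i+1) % (t+2) = i+1 := Nat.mod_eq_of_lt (by omega)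
            simp only [hmod, if_neg h1, if_pos h2, if_pos (show i ≤ t by omega),
              if_pos (show i+1 ≤ t by omega), hlast]
            exact ⟨hdU₀ i (by omega), hdU₀ (i+1) (by omega)⟩
          · by_cases h3 : i = t
            · have hmod : (i+1) % (t+2) = i+1 := Nat.mod_eq_of_lt (by omega)
              simp only [hmod, if_neg h1, if_neg h2, if_pos h3,
                if_pos (show i ≤ t by omega), if_neg (show ¬ (i+1 ≤ t) by omega)]
              constructor
              · have h5 : d ((t-1)+1) ∈ ψ (d (t-1)) := harc (t-1) (by omega)
                rw [show (t-1)+1 = t by omega] at h5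
                rw [h3]; exact h5
              · exact hw1
            · have h4 : i = t + 1 := by omega
              have hmod : (i+1) % (t+2) = 0 := by
                rw [h4, show t+1+1 = t+2 by omega, Nat.mod_self]
              simp only [hmod, if_neg h1, if_neg h2, if_neg h3,
                if_neg (show ¬ (i ≤ t) by omega), if_pos (show (0:ℕ) ≤ t by omega), hψw]
              refine ⟨Finset.mem_insert_self w _, Finset.mem_insert_of_mem ?_⟩
              exact Finset.mem_image.mpr ⟨0, Finset.mem_range.mpr (by omega), rfl⟩
    · -- no escape vertex: contradiction with injectivity of ψ
      push_neg at hwex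
      exfalso
      have h1 : ψ (d (t-1)) = U₀ := by
        apply Finset.eq_of_subset_of_card_le
        · exact fun w hw => hwex w hw
        · rw [hU₀card, hψcard _ (hdW (t-1) (by omega))]; omega
      have h2 : d (t-1) = d t :=
        hψinj _ (hdW (t-1) (by omega)) _ (hdW t le_rfl) (h1.trans hlast.symm)
      exact absurd (hdinj _ _ (by omega) le_rfl h2) (by omega)
  · -- Case B : t = r
    have htr : t = r := by omega
    have ht2 : 2 ≤ t := by omega
    have hψcardt : ∀ x ∈ W, (ψ x).card = t := by
      intro x hx; rw [hψcard x hx, htr]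
    rw [← htr]
    set U : Finset V := (Finset.range (t+1)).image d with hUdef
    have hdU : ∀ i, i ≤ t → d i ∈ U := fun i hi =>
      Finset.mem_image.mpr ⟨i, Finset.mem_range.mpr (by omega), rfl⟩
    have hUcard : U.card = t + 1 := by
      rw [hUdef, Finset.card_image_of_injOn, Finset.card_range]
      intro a ha b hb hab
      simp only [Finset.mem_coe, Finset.mem_range] at ha hb
      exact hdinj a b (by omega) (by omega) hab
    have hψd : ∀ a b, a ≤ t → b ≤ t → ψ (d a) = ψ (d b) → a = b := fun a b ha hb hab =>
      hdinj a b ha hb (hψinj _ (hdW a ha) _ (hdW b hb) hab)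
    have hstuckU : ∀ y ∈ ψ (d t), y ∈ U := by
      intro y hy
      obtain ⟨i, hi, hdi⟩ := hstuck y hy
      exact hdi ▸ hdU i hi
    have hmodval : ∀ n, n ≤ t → ((n+2) % (t+1) = n+2 ∧ n + 2 ≤ t) ∨
        ((n+2) % (t+1) = 0 ∧ n+1 = t) ∨ ((n+2) % (t+1) = 1 ∧ n = t) := by
      intro n hn
      rcases Nat.lt_or_ge (n+2) (t+1) with h1 | h1
      · left; exact ⟨Nat.mod_eq_of_lt h1, by omega⟩
      · have h2 : n + 2 = t+1 ∨ n + 2 = t+2 := by omega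
        rcases h2 with h2 | h2
        · right; left
          rw [h2, Nat.mod_self]; exact ⟨rfl, by omega⟩
        · right; right
          refine ⟨?_, by omega⟩
          rw [h2, show t+2 = (t+1)*1 + 1 by ring, Nat.mul_add_mod]
          exact Nat.mod_eq_of_lt (by omega)
    have hmodinj : ∀ a b, a < b → b ≤ t → (a+2) % (t+1) ≠ (b+2) % (t+1) := by
      intro a b hab hb hc
      have h1 : a ≡ b [MOD t+1] := Nat.ModEq.add_right_cancel' 2 hc
      have h2 := h1.eq_of_lt_of_lt (show a < t+1 by omega) (show b < t+1 by omega)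
      omega
    by_cases hv0 : v ∈ ψ (d t)
    · -- cycle of length t+1 through v using all matched edges
      right
      refine ⟨fun n => ψ (d n), d, ⟨?_, ?_, ?_, ?_⟩, 0, by omega, hd0⟩
      · intro a b hab hb hc
        exact absurd (hψd a b (by omega) (by omega) hc) (by omega)
      · intro a b hab hb; exact hdinj' a b hab (by omega)
      · intro n hn; exact hψH _ (hdW n (by omega))
      · intro n hn
        refine ⟨hψself _ (hdW n (by omega)), ?_⟩
        by_cases hn' : n + 1 ≤ t
        · rw [Nat.mod_eq_of_lt (by omega)]
          exact harc n (by omega)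
        · have h4 : n = t := by omega
          rw [h4, Nat.mod_self, hd0]
          exact hv0
    · -- the last edge misses exactly v
      have hlastEq : ψ (d t) = U.erase (d 0) := by
        apply Finset.eq_of_subset_of_card_le
        · intro y hy
          rw [Finset.mem_erase]
          refine ⟨fun hc => hv0 ?_, hstuckU y hy⟩
          rw [← hd0, ← hc]; exact hy
        · rw [Finset.card_erase_of_mem (hdU 0 (by omega)), hUcard,
            hψcardt _ (hdW t le_rfl)]
          omega
      have hmissing : ∀ A : Finset V, (∀ y ∈ A, y ∈ U) → A.card = t →
          ∃ s, s ≤ t ∧ A = U.erase (d s) := by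
        intro A hA hAc
        have hAsub : A ⊆ U := fun y hy => hA y hy
        have h1 : (U \ A).card = 1 := by
          rw [Finset.card_sdiff_of_subset hAsub, hUcard, hAc]
          omega
        obtain ⟨x, hx⟩ := Finset.card_eq_one.mp h1
        have hxU : x ∈ U := by
          have h2 : x ∈ U \ A := hx ▸ Finset.mem_singleton_self x
          exact (Finset.mem_sdiff.mp h2).1
        have hxA : x ∉ A := by
          have h2 : x ∈ U \ A := hx ▸ Finset.mem_singleton_self x
          exact (Finset.mem_sdiff.mp h2).2
        obtain ⟨i, hi, hdi⟩ := Finset.mem_image.mp hxU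
        refine ⟨i, by simp only [Finset.mem_range] at hi; omega, ?_⟩
        apply Finset.Subset.antisymm
        · intro y hy
          rw [Finset.mem_erase, hdi]
          exact ⟨fun hc => hxA (hc ▸ hy), hAsub hy⟩
        · intro y hy
          obtain ⟨hyne, hyU⟩ := Finset.mem_erase.mp hy
          by_contra hyA
          have h2 : y ∈ U \ A := Finset.mem_sdiff.mpr ⟨hyU, hyA⟩
          rw [hx, Finset.mem_singleton] at h2
          exact hyne (by rw [h2, hdi])
      by_cases hiex : ∃ i w', 1 ≤ i ∧ i + 1 ≤ t ∧ w' ∈ ψ (d i) ∧ w' ∉ U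
      · -- an interior escape vertex gives a long path
        left
        obtain ⟨i, w, hi1, hit, hwψ, hwU⟩ := hiex
        have hwd : ∀ a, a ≤ t → d a ≠ w := fun a ha hc => hwU (hc ▸ hdU a ha)
        refine ⟨fun n => if n < i then ψ (d n) else if n = i then ψ (d t)
          else if n + 1 ≤ t then ψ (d (t+i-n)) else ψ (d i),
          fun n => if n ≤ i then d n else if n ≤ t then d (t+i+1-n) else w,
          ⟨?_, ?_, ?_, ?_⟩, ?_⟩
        · intro a b hab hb
          beta_reduce
          split_ifs <;>
            first
              | omega
              | (exfalso; omega)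
              | (intro hc; exact absurd (hψd _ _ (by omega) (by omega) hc) (by omega))
        · intro a b hab hb
          beta_reduce
          split_ifs <;>
            first
              | omega
              | (exfalso; omega)
              | (intro hc; exact absurd (hdinj _ _ (by omega) (by omega) hc) (by omega))
              | (intro hc; exact hwd _ (by omega) hc)
        · intro n hn
          beta_reduce
          split_ifs <;> exact hψH _ (hdW _ (by omega))
        · intro n hn
          by_cases h1 : n < i
          · simp only [if_pos h1, if_pos (show n ≤ i by omega),
              if_pos (show n+1 ≤ i by omega)]
            exact ⟨hψself _ (hdW n (by omega)), harc n (by omega)⟩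
          · by_cases h2 : n = i
            · simp only [if_neg h1, if_pos h2, if_pos (show n ≤ i by omega),
                if_neg (show ¬ (n+1 ≤ i) by omega), if_pos (show n+1 ≤ t by omega),
                hlastEq]
              rw [h2, show t + i + 1 - (i+1) = t by omega]
              constructor
              · rw [Finset.mem_erase]
                exact ⟨fun hc => absurd (hdinj _ _ (by omega) (by omega) hc) (by omega),
                  hdU i (by omega)⟩
              · rw [Finset.mem_erase]
                exact ⟨fun hc => absurd (hdinj _ _ (by omega) (by omega) hc) (by omega),
                  hdU t (by omega)⟩
            · by_cases h3 : n + 1 ≤ t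
              · simp only [if_neg h1, if_neg h2, if_pos h3,
                  if_neg (show ¬ (n ≤ i) by omega), if_pos (show n ≤ t by omega),
                  if_neg (show ¬ (n+1 ≤ i) by omega), if_pos (show n+1 ≤ t by omega)]
                constructor
                · rw [show t + i + 1 - n = (t+i-n) + 1 by omega]
                  exact harc _ (by omega)
                · rw [show t + i + 1 - (n+1) = t+i-n by omega]
                  exact hψself _ (hdW _ (by omega))
              · have h4 : n = t := by omega
                simp only [if_neg h1, if_neg h2, if_neg h3,
                  if_neg (show ¬ (n ≤ i) by omega), if_pos (show n ≤ t by omega),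
                  if_neg (show ¬ (n+1 ≤ i) by omega), if_neg (show ¬ (n+1 ≤ t) by omega)]
                constructor
                · rw [h4, show t + i + 1 - t = i + 1 by omega]
                  exact harc i (by omega)
                · exact hwψ
        · simp only [if_pos (show (0:ℕ) ≤ i by omega)]; exact hd0
      · -- no interior escapes: interior edges live inside U
        push_neg at hiex
        have hseval : ∀ i, ∃ s, 1 ≤ i → i ≤ t → (s ≤ t ∧ ψ (d i) = U.erase (d s)) := by
          intro i
          by_cases hcase : 1 ≤ i ∧ i ≤ t
          · by_cases hlt : i = t
            · exact ⟨0, fun _ _ => ⟨by omega, by rw [hlt]; exact hlastEq⟩⟩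
            · obtain ⟨s, hs1, hs2⟩ := hmissing (ψ (d i))
                (fun y hy => hiex i y (by omega) (by omega) hy)
                (hψcardt _ (hdW i (by omega)))
              exact ⟨s, fun _ _ => ⟨hs1, hs2⟩⟩
          · exact ⟨0, fun h1 h2 => absurd ⟨h1, h2⟩ hcase⟩
        choose σ hσ using hseval
        have hσle : ∀ i, 1 ≤ i → i ≤ t → σ i ≤ t := fun i h1 h2 => (hσ i h1 h2).1
        have hσeq : ∀ i, 1 ≤ i → i ≤ t → ψ (d i) = U.erase (d (σ i)) :=
          fun i h1 h2 => (hσ i h1 h2).2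
        have hσt : σ t = 0 := by
          have h1 : U.erase (d (σ t)) = U.erase (d 0) := by
            rw [← hσeq t (by omega) le_rfl]; exact hlastEq
          have h2 := (Finset.erase_inj U (hdU (σ t) (hσle t (by omega) le_rfl))).mp h1
          exact hdinj _ _ (hσle t (by omega) le_rfl) (by omega) h2
        have hσself : ∀ i, 1 ≤ i → i ≤ t → σ i ≠ i := by
          intro i h1 h2 hc
          have h3 := hψself _ (hdW i h2)
          rw [hσeq i h1 h2, Finset.mem_erase, hc] at h3
          exact h3.1 rfl
        have hσsucc : ∀ i, 1 ≤ i → i + 1 ≤ t → σ i ≠ i + 1 := by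
          intro i h1 h2 hc
          have h3 := harc i (by omega)
          rw [hσeq i h1 (by omega), Finset.mem_erase, hc] at h3
          exact h3.1 rfl
        have hσinj : ∀ a b, 1 ≤ a → a ≤ t → 1 ≤ b → b ≤ t → σ a = σ b → a = b := by
          intro a b ha1 ha2 hb1 hb2 hc
          apply hψd a b (by omega) (by omega)
          rw [hσeq a ha1 ha2, hσeq b hb1 hb2, hc]
        by_cases hsub0 : ∀ y ∈ ψ (d 0), y ∈ U
        · -- (a) : everything inside U, full permutation, cycle through all of U
          obtain ⟨s0, hs0le, hs0eq⟩ := hmissing (ψ (d 0)) hsub0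
            (hψcardt _ (hdW 0 (by omega)))
          have hσ'le : ∀ i, i ≤ t → (if i = 0 then s0 else σ i) ≤ t := by
            intro i hi
            by_cases h0 : i = 0
            · rw [if_pos h0]; exact hs0le
            · rw [if_neg h0]; exact hσle i (by omega) hi
          have hσ'eq : ∀ i, i ≤ t → ψ (d i) = U.erase (d (if i = 0 then s0 else σ i)) := by
            intro i hi
            by_cases h0 : i = 0
            · rw [if_pos h0, h0]; exact hs0eq
            · rw [if_neg h0]; exact hσeq i (by omega) hi
          have hσ'inj : ∀ a b, a ≤ t → b ≤ t →
              (if a = 0 then s0 else σ a) = (if b = 0 then s0 else σ b) → a = b := by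
            intro a b ha hb hc
            apply hψd a b ha hb
            rw [hσ'eq a ha, hσ'eq b hb, hc]
          have himg : ∀ c, ∃ i, c ≤ t → (i ≤ t ∧ (if i = 0 then s0 else σ i) = c) := by
            intro c
            by_cases hc : c ≤ t
            · have h1 : (Finset.range (t+1)).image (fun i => if i = 0 then s0 else σ i) =
                  Finset.range (t+1) := by
                apply Finset.eq_of_subset_of_card_le
                · intro x hx
                  obtain ⟨i, hi, hix⟩ := Finset.mem_image.mp hx
                  simp only [Finset.mem_range] at hi ⊢
                  have h2 := hσ'le i (by omega)
                  omega
                · rw [Finset.card_image_of_injOn, Finset.card_range]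
                  intro a ha b hb hab
                  simp only [Finset.mem_coe, Finset.mem_range] at ha hb
                  exact hσ'inj a b (by omega) (by omega) hab
              have h2 : c ∈ (Finset.range (t+1)).image (fun i => if i = 0 then s0 else σ i) := by
                rw [h1]; exact Finset.mem_range.mpr (by omega)
              obtain ⟨i, hi, hic⟩ := Finset.mem_image.mp h2
              simp only [Finset.mem_range] at hi
              exact ⟨i, fun _ => ⟨by omega, hic⟩⟩
            · exact ⟨0, fun h => absurd h hc⟩
          choose inv hinv using himg
          have hkey : ∀ n, n ≤ t → (n+2) % (t+1) ≤ t ∧ (n+2) % (t+1) ≠ n ∧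
              (n+2) % (t+1) ≠ (n+1) % (t+1) ∧ (n+1) % (t+1) ≤ t := by
            intro n hn
            by_cases h3 : n = t
            · have e1 : (n+1) % (t+1) = 0 := by rw [h3, Nat.mod_self]
              have e2 : (n+2) % (t+1) = 1 := by
                rw [h3, show t+2 = (t+1)*1 + 1 by ring, Nat.mul_add_mod]
                exact Nat.mod_eq_of_lt (by omega)
              rw [e1, e2]
              exact ⟨by omega, by omega, by omega, by omega⟩
            · by_cases h2 : n + 1 = t
              · have e1 : (n+1) % (t+1) = n+1 := Nat.mod_eq_of_lt (by omega)
                have e2 : (n+2) % (t+1) = 0 := by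
                  rw [show n+2 = t+1 by omega, Nat.mod_self]
                rw [e1, e2]
                exact ⟨by omega, by omega, by omega, by omega⟩
              · have e1 : (n+1) % (t+1) = n+1 := Nat.mod_eq_of_lt (by omega)
                have e2 : (n+2) % (t+1) = n+2 := Nat.mod_eq_of_lt (by omega)
                rw [e1, e2]
                exact ⟨by omega, by omega, by omega, by omega⟩
          right
          refine ⟨fun n => ψ (d (inv ((n+2) % (t+1)))), d, ⟨?_, ?_, ?_, ?_⟩, 0, by omega, hd0⟩
          · intro a b hab hb hc
            have hma := (hkey a (by omega)).1
            have hmb := (hkey b (by omega)).1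
            have h1 := hψd _ _ ((hinv _ hma).1) ((hinv _ hmb).1) hc
            have h2 : (a+2) % (t+1) = (b+2) % (t+1) := by
              rw [← (hinv _ hma).2, ← (hinv _ hmb).2, h1]
            exact hmodinj a b hab (by omega) h2
          · intro a b hab hb; exact hdinj' a b hab (by omega)
          · intro n hn
            exact hψH _ (hdW _ ((hinv _ (hkey n (by omega)).1).1))
          · intro n hn
            obtain ⟨k1, k2, k3, k4⟩ := hkey n (by omega)
            have he : ψ (d (inv ((n+2) % (t+1)))) = U.erase (d ((n+2) % (t+1))) := by
              rw [hσ'eq _ ((hinv _ k1).1), (hinv _ k1).2]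
            beta_reduce
            rw [he]
            constructor
            · rw [Finset.mem_erase]
              exact ⟨fun hc => k2 ((hdinj _ _ (by omega) k1 hc).symm),
                hdU n (by omega)⟩
            · rw [Finset.mem_erase]
              exact ⟨fun hc => k3 ((hdinj _ _ k4 k1 hc).symm), hdU _ k4⟩
        · -- (b) : the first edge escapes U
          push_neg at hsub0
          obtain ⟨w, hw, hwU⟩ := hsub0
          have hwd : ∀ a, a ≤ t → d a ≠ w := fun a ha hc => hwU (hc ▸ hdU a ha)
          have hMcard : ((Finset.Icc 1 t).image σ).card = t := by
            have hinjM : Set.InjOn σ (Finset.Icc 1 t) := by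
              intro a ha b hb hab
              simp only [Finset.coe_Icc, Set.mem_Icc] at ha hb
              exact hσinj a b ha.1 ha.2 hb.1 hb.2 hab
            rw [Finset.card_image_of_injOn hinjM, Nat.card_Icc]
            omega
          have hMsub : (Finset.Icc 1 t).image σ ⊆ Finset.range (t+1) := by
            intro x hx
            obtain ⟨i, hi, hix⟩ := Finset.mem_image.mp hx
            simp only [Finset.mem_Icc] at hi
            rw [Finset.mem_range, ← hix]
            have := hσle i hi.1 hi.2
            omega
          have hsex : ∃ s, s ∈ Finset.range (t+1) \ (Finset.Icc 1 t).image σ := by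
            apply Finset.card_pos.mp
            rw [Finset.card_sdiff_of_subset hMsub, Finset.card_range, hMcard]
            omega
          obtain ⟨s, hs⟩ := hsex
          obtain ⟨hsr, hsM⟩ := Finset.mem_sdiff.mp hs
          rw [Finset.mem_range] at hsr
          have hsle : s ≤ t := by omega
          have hs0 : s ≠ 0 := by
            intro hc
            apply hsM
            rw [Finset.mem_image]
            exact ⟨t, Finset.mem_Icc.mpr ⟨by omega, le_rfl⟩, by rw [hσt, hc]⟩
          have hMeq : (Finset.Icc 1 t).image σ = (Finset.range (t+1)).erase s := by
            apply Finset.eq_of_subset_of_card_le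
            · intro x hx
              rw [Finset.mem_erase]
              exact ⟨fun hc => hsM (hc ▸ hx), hMsub hx⟩
            · rw [Finset.card_erase_of_mem (Finset.mem_range.mpr (by omega)),
                Finset.card_range, hMcard]
              omega
          have hτex : ∀ c, ∃ i, c ≤ t → c ≠ s → (1 ≤ i ∧ i ≤ t ∧ σ i = c) := by
            intro c
            by_cases hc : c ≤ t ∧ c ≠ s
            · have h1 : c ∈ (Finset.Icc 1 t).image σ := by
                rw [hMeq, Finset.mem_erase]
                exact ⟨hc.2, Finset.mem_range.mpr (by omega)⟩
              obtain ⟨i, hi, hic⟩ := Finset.mem_image.mp h1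
              rw [Finset.mem_Icc] at hi
              exact ⟨i, fun _ _ => ⟨hi.1, hi.2, hic⟩⟩
            · exact ⟨1, fun h1 h2 => absurd ⟨h1, h2⟩ hc⟩
          choose τ hτ using hτex
          have hbuild : ∀ π lab : ℕ → ℕ, π 0 = 0 → π t = 1 →
              (∀ h, h ≤ t → π h ≤ t) →
              (∀ a b, a ≤ t → b ≤ t → π a = π b → a = b) →
              (∀ h, h + 1 ≤ t → lab h ≤ t ∧ lab h ≠ s ∧ lab h ≠ π h ∧ lab h ≠ π (h+1)) →
              (∀ a b, a < b → b + 1 ≤ t → lab a ≠ lab b) →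
              ∃ e p, NPath H (t+1) e p ∧ p 0 = v := by
            intro π lab hπ0 hπt hπle hπinj hlab hlabinj
            refine ⟨fun n => if n + 1 ≤ t then ψ (d (τ (lab n))) else ψ (d 0),
              fun n => if n ≤ t then d (π n) else w, ⟨?_, ?_, ?_, ?_⟩, ?_⟩
            · intro a b hab hb
              beta_reduce
              by_cases h1 : a + 1 ≤ t <;> by_cases h2 : b + 1 ≤ t
              · rw [if_pos h1, if_pos h2]
                intro hc
                obtain ⟨hla1, hla2, _, _⟩ := hlab a h1
                obtain ⟨hlb1, hlb2, _, _⟩ := hlab b h2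
                obtain ⟨hτa1, hτa2, hτa3⟩ := hτ (lab a) hla1 hla2
                obtain ⟨hτb1, hτb2, hτb3⟩ := hτ (lab b) hlb1 hlb2
                have h3 := hψd _ _ hτa2 hτb2 hc
                have h4 : lab a = lab b := by rw [← hτa3, ← hτb3, h3]
                exact hlabinj a b hab h2 h4
              · rw [if_pos h1, if_neg h2]
                intro hc
                obtain ⟨hla1, hla2, _, _⟩ := hlab a h1
                obtain ⟨hτa1, hτa2, hτa3⟩ := hτ (lab a) hla1 hla2
                have h3 := hψd _ _ hτa2 (by omega) hc
                omega
              · omega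
              · omega
            · intro a b hab hb
              beta_reduce
              by_cases h1 : a ≤ t <;> by_cases h2 : b ≤ t
              · rw [if_pos h1, if_pos h2]
                intro hc
                have h3 := hπinj _ _ h1 h2 (hdinj _ _ (hπle a h1) (hπle b h2) hc)
                omega
              · rw [if_pos h1, if_neg h2]
                exact hwd _ (hπle a h1)
              · omega
              · omega
            · intro n hn
              beta_reduce
              by_cases h1 : n + 1 ≤ t
              · rw [if_pos h1]
                obtain ⟨hl1, hl2, _, _⟩ := hlab n h1
                obtain ⟨hτ1, hτ2, hτ3⟩ := hτ (lab n) hl1 hl2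
                exact hψH _ (hdW _ hτ2)
              · rw [if_neg h1]
                exact hψH _ (hdW 0 (by omega))
            · intro n hn
              by_cases h1 : n + 1 ≤ t
              · obtain ⟨hl1, hl2, hl3, hl4⟩ := hlab n h1
                obtain ⟨hτ1, hτ2, hτ3⟩ := hτ (lab n) hl1 hl2
                have he : ψ (d (τ (lab n))) = U.erase (d (lab n)) := by
                  rw [hσeq _ hτ1 hτ2, hτ3]
                simp only [if_pos h1, if_pos (show n ≤ t by omega),
                  if_pos (show n + 1 ≤ t from h1), he]
                constructor
                · rw [Finset.mem_erase]
                  exact ⟨fun hc => hl3 ((hdinj _ _ (hπle n (by omega)) hl1 hc).symm),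
                    hdU _ (hπle n (by omega))⟩
                · rw [Finset.mem_erase]
                  exact ⟨fun hc => hl4 ((hdinj _ _ (hπle (n+1) (by omega)) hl1 hc).symm),
                    hdU _ (hπle (n+1) (by omega))⟩
              · have h2 : n = t := by omega
                simp only [if_neg h1, if_pos (show n ≤ t by omega)]
                constructor
                · rw [h2, hπt]
                  exact harc 0 (by omega)
                · exact hw
            · simp only [if_pos (show (0:ℕ) ≤ t by omega), hπ0, hd0]
          by_cases hs1 : s = 1
          · -- the missing label is 1
            left
            have ht3 : 3 ≤ t := by
              rcases Nat.lt_or_ge t 3 with h1 | h1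
              · exfalso
                have e1 : σ 1 ≤ t := hσle 1 (by omega) (by omega)
                have e2 : σ 1 ≠ 1 := hσself 1 (by omega) (by omega)
                have e3 : σ 1 ≠ 2 := by
                  have := hσsucc 1 (by omega) (by omega)
                  omega
                have e4 : σ 1 = 0 := by omega
                have e5 : σ t = 0 := hσt
                have := hσinj 1 t (by omega) (by omega) (by omega) le_rfl (by rw [e4, e5])
                omega
              · exact h1
            have hπle : ∀ h, h ≤ t →
                (if h = 1 then t else if h = t then 1 else h) ≤ t := by
              intro h hh; split_ifs <;> omega
            have hπinj : ∀ a b, a ≤ t → b ≤ t →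
                (if a = 1 then t else if a = t then 1 else a) =
                (if b = 1 then t else if b = t then 1 else b) → a = b := by
              intro a b ha hb hab
              split_ifs at hab <;> omega
            apply hbuild (fun h => if h = 1 then t else if h = t then 1 else h)
              (fun h => if h = 0
                then (if t-1 = 1 then t else if t-1 = t then 1 else t-1)
                else (if h-1 = 1 then t else if h-1 = t then 1 else h-1))
            · show (if (0:ℕ) = 1 then t else if (0:ℕ) = t then 1 else 0) = 0
              rw [if_neg (by omega : ¬ (0:ℕ) = 1), if_neg (by omega : ¬ (0:ℕ) = t)]
            · show (if t = 1 then t else if t = t then 1 else t) = 1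
              rw [if_neg (by omega : ¬ t = 1), if_pos rfl]
            · exact hπle
            · exact hπinj
            · intro h hh
              refine ⟨?_, ?_, ?_, ?_⟩
              · by_cases h0 : h = 0
                · rw [if_pos h0]; exact hπle _ (by omega)
                · rw [if_neg h0]; exact hπle _ (by omega)
              · rw [hs1]
                by_cases h0 : h = 0
                · rw [if_pos h0]
                  intro hc
                  have h4 : (if t = 1 then t else if t = t then 1 else t) = 1 := by
                    split_ifs <;> omega
                  have := hπinj _ _ (by omega) (by omega) (hc.trans h4.symm)
                  omega
                · rw [if_neg h0]
                  intro hc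
                  have h4 : (if t = 1 then t else if t = t then 1 else t) = 1 := by
                    split_ifs <;> omega
                  have := hπinj _ _ (by omega) (by omega) (hc.trans h4.symm)
                  omega
              · by_cases h0 : h = 0
                · rw [if_pos h0, h0]
                  intro hc
                  have := hπinj _ _ (by omega) (by omega) hc
                  omega
                · rw [if_neg h0]
                  intro hc
                  have := hπinj _ _ (by omega) (by omega) hc
                  omega
              · by_cases h0 : h = 0
                · rw [if_pos h0, h0]
                  intro hc
                  have := hπinj _ _ (by omega) (by omega) hc
                  omega
                · rw [if_neg h0]
                  intro hc
                  have := hπinj _ _ (by omega) (by omega) hc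
                  omega
            · intro a b hab hb
              by_cases h0 : a = 0
              · rw [if_pos h0, if_neg (show b ≠ 0 by omega)]
                intro hc
                have := hπinj _ _ (by omega) (by omega) hc
                omega
              · rw [if_neg h0, if_neg (show b ≠ 0 by omega)]
                intro hc
                have := hπinj _ _ (by omega) (by omega) hc
                omega
          · -- the missing label is at least 2
            left
            have hs2 : 2 ≤ s := by omega
            have hπle : ∀ h, h ≤ t →
                (if h = 0 then 0 else if h = 1 then s else if h = t then 1
                  else if h < s then h else h + 1) ≤ t := by
              intro h hh; split_ifs <;> omega
            have hπinj : ∀ a b, a ≤ t → b ≤ t →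
                (if a = 0 then 0 else if a = 1 then s else if a = t then 1
                  else if a < s then a else a + 1) =
                (if b = 0 then 0 else if b = 1 then s else if b = t then 1
                  else if b < s then b else b + 1) → a = b := by
              intro a b ha hb hab
              split_ifs at hab <;> omega
            have hπ0 : (if (0:ℕ) = 0 then 0 else if (0:ℕ) = 1 then s else if (0:ℕ) = t then 1
                  else if (0:ℕ) < s then (0:ℕ) else 0 + 1) = 0 := by
              rw [if_pos rfl]
            have hπ1 : (if (1:ℕ) = 0 then 0 else if (1:ℕ) = 1 then s else if (1:ℕ) = t then 1
                  else if (1:ℕ) < s then (1:ℕ) else 1 + 1) = s := by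
              rw [if_neg (by omega : ¬ (1:ℕ) = 0), if_pos rfl]
            apply hbuild (fun h => if h = 0 then 0 else if h = 1 then s else if h = t then 1
                  else if h < s then h else h + 1)
              (fun h => if (h+2) % (t+1) = 0 then 0 else if (h+2) % (t+1) = 1 then s
                  else if (h+2) % (t+1) = t then 1
                  else if (h+2) % (t+1) < s then (h+2) % (t+1) else (h+2) % (t+1) + 1)
            · exact hπ0
            · show (if t = 0 then 0 else if t = 1 then s else if t = t then 1
                  else if t < s then t else t + 1) = 1
              rw [if_neg (by omega : ¬ t = 0), if_neg (by omega : ¬ t = 1), if_pos rfl]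
            · exact hπle
            · exact hπinj
            · intro h hh
              refine ⟨hπle _ ?_, ?_, ?_, ?_⟩
              · rcases hmodval h (by omega) with ⟨e1, e2⟩ | ⟨e1, e2⟩ | ⟨e1, e2⟩ <;> omega
              · intro hc
                have h4 := hπinj _ _ (by rcases hmodval h (by omega) with ⟨e1, e2⟩ | ⟨e1, e2⟩ | ⟨e1, e2⟩ <;> omega) (by omega) (hc.trans hπ1.symm)
                rcases hmodval h (by omega) with ⟨e1, e2⟩ | ⟨e1, e2⟩ | ⟨e1, e2⟩ <;> omega
              · intro hc
                have h4 := hπinj _ _ (by rcases hmodval h (by omega) with ⟨e1, e2⟩ | ⟨e1, e2⟩ | ⟨e1, e2⟩ <;> omega) (by omega) hc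
                rcases hmodval h (by omega) with ⟨e1, e2⟩ | ⟨e1, e2⟩ | ⟨e1, e2⟩ <;> omega
              · intro hc
                have h4 := hπinj _ _ (by rcases hmodval h (by omega) with ⟨e1, e2⟩ | ⟨e1, e2⟩ | ⟨e1, e2⟩ <;> omega) (by omega) hc
                rcases hmodval h (by omega) with ⟨e1, e2⟩ | ⟨e1, e2⟩ | ⟨e1, e2⟩ <;> omega
            · intro a b hab hb
              intro hc
              have h4 := hπinj _ _
                (by rcases hmodval a (by omega) with ⟨e1, e2⟩ | ⟨e1, e2⟩ | ⟨e1, e2⟩ <;> omega)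
                (by rcases hmodval b (by omega) with ⟨e1, e2⟩ | ⟨e1, e2⟩ | ⟨e1, e2⟩ <;> omega)
                hc
              have h5 := hmodinj a b hab (by omega)
              omega

end BergeAux
namespace BergeAux
variable {V : Type*}

set_option maxHeartbeats 1600000 in
theorem thmDagger [Fintype V] [DecidableEq V] (r : ℕ) (hr : 2 ≤ r) :
    ∀ (N : ℕ) (H : Finset (Finset V)), H.card ≤ N →
    (∀ f ∈ H, f.card = r) → H.Nonempty →
    (H.biUnion id).card ≤ H.card →
    (∃ e c, NCycle H (r+1) e c) ∨
    (∃ K : Finset V, K.Nonempty ∧ ∀ x ∈ K, ∃ e p, NPath H (r+1) e p ∧ p 0 = x ∧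
      (∀ i, i ≤ r+1 → p i ∈ K) ∧ (∀ i, i < r+1 → e i ⊆ K)) := by
  intro N
  induction N with
  | zero =>
    intro H hN hu hne hcard
    exact absurd (Finset.card_pos.mpr hne) (by omega)
  | succ N ih =>
    intro H hN hu hne hcard
    set W := H.biUnion id with hWdef
    have hsubW : ∀ f ∈ H, f ⊆ W := by
      intro f hf x hx
      exact Finset.mem_biUnion.mpr ⟨f, hf, hx⟩
    by_cases hHall : ∀ s : Finset ↥W,
        s.card ≤ (s.biUnion (fun x => H.filter (fun e => ↑x ∈ e))).card
    · -- Hall's condition holds: get a system of distinct representatives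
      have hallIff := Finset.all_card_le_biUnion_card_iff_existsInjective'
          (fun x : ↥W => H.filter (fun e => ↑x ∈ e))
      rw [hallIff] at hHall
      obtain ⟨f, hfinj, hf⟩ := hHall
      set ψ : V → Finset V := fun x => if h : x ∈ W then f ⟨x, h⟩ else ∅ with hψdef
      have hψH : ∀ x ∈ W, ψ x ∈ H := by
        intro x hx
        simp only [hψdef, dif_pos hx]
        exact Finset.mem_of_mem_filter _ (hf ⟨x, hx⟩)
      have hψself : ∀ x ∈ W, x ∈ ψ x := by
        intro x hx
        simp only [hψdef, dif_pos hx]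
        exact (Finset.mem_filter.mp (hf ⟨x, hx⟩)).2
      have hψcard : ∀ x ∈ W, (ψ x).card = r := fun x hx => hu _ (hψH x hx)
      have hψinjW : ∀ x ∈ W, ∀ y ∈ W, ψ x = ψ y → x = y := by
        intro x hx y hy hxy
        simp only [hψdef, dif_pos hx, dif_pos hy] at hxy
        exact congrArg Subtype.val (hfinj hxy)
      by_cases hcyc : ∃ x ∈ W, ∃ e c, NCycle H (r+1) e c ∧ ∃ i, i < r+1 ∧ c i = x
      · obtain ⟨x, hx, e, c, hc, _⟩ := hcyc
        exact Or.inl ⟨e, c, hc⟩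
      · right
        refine ⟨W, ?_, ?_⟩
        · obtain ⟨g, hg⟩ := hne
          have hgpos : 0 < g.card := by rw [hu g hg]; omega
          obtain ⟨y, hy⟩ := Finset.card_pos.mp hgpos
          exact ⟨y, hsubW g hg hy⟩
        · intro x hx
          rcases core hr hsubW ψ hψH hψself hψcard hψinjW hx with
            ⟨e, p, hp, hp0⟩ | ⟨e, c, hc, i, hi, hci⟩
          · refine ⟨e, p, hp, hp0, ?_, ?_⟩
            · intro i hi
              exact hp.mem_support (by omega) hsubW i hi
            · intro i hi
              exact hsubW _ (hp.2.2.1 i hi)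
          · exact absurd ⟨x, hx, e, c, hc, i, hi, hci⟩ hcyc
    · -- Hall's condition fails: remove the deficient set and recurse
      push_neg at hHall
      obtain ⟨s, hs⟩ := hHall
      set S : Finset V := s.image Subtype.val with hSdef
      have hScard : S.card = s.card :=
        Finset.card_image_of_injective _ Subtype.val_injective
      have hSW : S ⊆ W := by
        intro x hx
        obtain ⟨y, _, hyx⟩ := Finset.mem_image.mp hx
        exact hyx ▸ y.2
      have hSne : s.Nonempty := by
        by_contra hc
        rw [Finset.not_nonempty_iff_eq_empty] at hc
        rw [hc] at hs
        simp at hs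
      have hDeq : s.biUnion (fun x => H.filter (fun e => ↑x ∈ e)) =
          H.filter (fun e => ∃ x ∈ S, x ∈ e) := by
        ext g
        constructor
        · intro hg
          obtain ⟨x, hxs, hgx⟩ := Finset.mem_biUnion.mp hg
          obtain ⟨h1, h2⟩ := Finset.mem_filter.mp hgx
          exact Finset.mem_filter.mpr ⟨h1, ↑x, Finset.mem_image.mpr ⟨x, hxs, rfl⟩, h2⟩
        · intro hg
          obtain ⟨h1, x, hxS, h2⟩ := Finset.mem_filter.mp hg
          obtain ⟨y, hys, rfl⟩ := Finset.mem_image.mp hxS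
          exact Finset.mem_biUnion.mpr ⟨y, hys, Finset.mem_filter.mpr ⟨h1, h2⟩⟩
      set H' : Finset (Finset V) := H.filter (fun e => ¬ ∃ x ∈ S, x ∈ e) with hH'def
      have hH'sub : H' ⊆ H := Finset.filter_subset _ _
      have hsplit : (H.filter (fun e => ∃ x ∈ S, x ∈ e)).card + H'.card = H.card :=
        Finset.card_filter_add_card_filter_not _
      have hd1 : 1 ≤ (H.filter (fun e => ∃ x ∈ S, x ∈ e)).card := by
        obtain ⟨x, hxs⟩ := hSne
        have hxW : (↑x : V) ∈ W := x.2
        obtain ⟨g, hg, hxg⟩ := Finset.mem_biUnion.mp hxW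
        apply Finset.card_pos.mpr
        exact ⟨g, Finset.mem_filter.mpr
          ⟨hg, ⟨↑x, Finset.mem_image.mpr ⟨x, hxs, rfl⟩, hxg⟩⟩⟩
      have hdS : (H.filter (fun e => ∃ x ∈ S, x ∈ e)).card < S.card := by
        rw [hDeq] at hs
        omega
      set W' := H'.biUnion id with hW'def
      have hW'sub : W' ⊆ W \ S := by
        intro x hx
        obtain ⟨g, hg, hxg⟩ := Finset.mem_biUnion.mp hx
        obtain ⟨hgH, hgS⟩ := Finset.mem_filter.mp hg
        rw [Finset.mem_sdiff]
        exact ⟨Finset.mem_biUnion.mpr ⟨g, hgH, hxg⟩, fun hxS => hgS ⟨x, hxS, hxg⟩⟩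
      have hSWcard : S.card ≤ W.card := Finset.card_le_card hSW
      have hW'card : W'.card ≤ W.card - S.card := by
        have h1 := Finset.card_le_card hW'sub
        rwa [Finset.card_sdiff_of_subset hSW] at h1
      have hH'ne : H'.Nonempty := by
        apply Finset.card_pos.mp
        omega
      have hH'card : (H'.biUnion id).card ≤ H'.card := by
        rw [← hW'def]
        omega
      rcases ih H' (by omega) (fun f hf => hu f (hH'sub hf)) hH'ne hH'card with
        ⟨e, c, hc⟩ | ⟨K, hKne, hK⟩
      · exact Or.inl ⟨e, c, hc.mono hH'sub⟩
      · right
        refine ⟨K, hKne, fun x hx => ?_⟩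
        obtain ⟨e, p, hp, h0, hmem, hedge⟩ := hK x hx
        exact ⟨e, p, hp.mono hH'sub, h0, hmem, hedge⟩

end BergeAux
namespace BergeAux
variable {V : Type*}

theorem mod_shift_ne {r : ℕ} (x m : ℕ) (hx : x ≤ r) (hm1 : 1 ≤ m) (hm2 : m ≤ r) :
    (x + m) % (r+1) ≠ x := by
  intro hc
  have h1 : (x + m) % (r+1) = (x + 0) % (r+1) := by
    have h0 : (x + 0) % (r+1) = x := by
      rw [Nat.add_zero]
      exact Nat.mod_eq_of_lt (by omega)
    rw [h0]
    exact hc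
  have h2 : m ≡ 0 [MOD r+1] := Nat.ModEq.add_left_cancel' x h1
  have h3 : m % (r+1) = 0 % (r+1) := h2
  rw [Nat.mod_eq_of_lt (show m < r+1 by omega), Nat.zero_mod] at h3
  omega

end BergeAux


set_option maxHeartbeats 1600000 in
/-- Stronger version: in a connected `r`-uniform hypergraph on `n` vertices with at
least `n` hyperedges, every vertex `v` either starts a Berge path of length `r+1`
or lies on a Berge cycle of length `r+1`. -/
theorem hypergraph_berge_path_or_cycle_from_every_vertex (V : Type*) [Fintype V] (r : ℕ)
    (hr : 2 ≤ r) (H : Finset (Finset V))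
    (huniform : ∀ f ∈ H, f.card = r)
    (hconn : HypergraphConnected H)
    (hcard : H.card ≥ Fintype.card V) :
    ∀ v : V,
      (∃ (e : Fin (r + 1) → Finset V) (p : Fin (r + 2) → V),
        IsBergePath H (r + 1) e p ∧ p 0 = v) ∨
      (∃ (e : Fin (r + 1) → Finset V) (c : Fin (r + 1) → V),
        IsBergeCycle H (r + 1) e c ∧ ∃ i, c i = v) := by
  classical
  intro v
  by_cases hV1 : Fintype.card V ≤ 1
  · exfalso
    have hpos : 0 < Fintype.card V := Fintype.card_pos_iff.mpr ⟨v⟩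
    have hHne : H.Nonempty := Finset.card_pos.mp (by omega)
    obtain ⟨f, hf⟩ := hHne
    have h1 := huniform f hf
    have h2 : f.card ≤ Fintype.card V := Finset.card_le_univ f
    omega
  push_neg at hV1
  have hsupp : ∀ x : V, x ∈ H.biUnion id := by
    intro x
    obtain ⟨y, hy⟩ := Fintype.exists_ne_of_one_lt_card hV1 x
    obtain ⟨k, e, p, hpath, hp0, hpl⟩ := hconn x y
    have hk : 0 < k := by
      rcases Nat.eq_zero_or_pos k with h0 | h0
      · exfalso
        apply hy
        subst h0
        rw [← hpl, ← hp0]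
        exact congrArg p (Fin.ext (by simp [Fin.last]))
      · exact h0
    have h1 := hpath.2.2.2 ⟨0, hk⟩
    refine Finset.mem_biUnion.mpr ⟨e ⟨0, hk⟩, hpath.2.2.1 _, ?_⟩
    rw [← hp0]
    exact h1.1
  have hWcard : (H.biUnion id).card ≤ H.card := by
    rw [Finset.eq_univ_of_forall hsupp, Finset.card_univ]
    exact hcard
  have hHne : H.Nonempty := by
    apply Finset.card_pos.mp
    have := Fintype.card_pos_iff.mpr ⟨v⟩
    omega
  have finishL : ∀ (e : ℕ → Finset V) (p : ℕ → V), BergeAux.NPath H (r+1) e p → p 0 = v →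
      (∃ (e' : Fin (r + 1) → Finset V) (p' : Fin (r + 2) → V),
        IsBergePath H (r + 1) e' p' ∧ p' 0 = v) := by
    intro e p hnp hp0
    exact ⟨_, _, hnp.isBergePath, hp0⟩
  rcases BergeAux.thmDagger r hr H.card H le_rfl huniform hHne hWcard with
    ⟨g, c, hgc⟩ | ⟨K, hKne, hK⟩
  · -- a Berge cycle of length r+1 exists somewhere
    by_cases hvc : ∃ i, i < r+1 ∧ c i = v
    · right
      obtain ⟨i, hi, hci⟩ := hvc
      exact ⟨_, _, hgc.isBergeCycle, ⟨i, hi⟩, hci⟩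
    · push_neg at hvc
      left
      have hginj : ∀ a b, a ≤ r → b ≤ r → g a = g b → a = b := by
        intro a b ha hb hab
        rcases Nat.lt_trichotomy a b with h | h | h
        · exact absurd hab (hgc.1 a b h (by omega))
        · exact h
        · exact absurd hab.symm (hgc.1 b a h (by omega))
      obtain ⟨k, ef, pf, hpath, hp0, hpl⟩ := hconn v (c 0)
      obtain ⟨e1, p1, hnp, hq0, hqk⟩ := BergeAux.exists_nPath hpath
      rw [hp0] at hq0
      rw [hpl] at hqk
      have hk : 0 < k := by
        rcases Nat.eq_zero_or_pos k with h0 | h0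
        · exfalso
          apply hvc 0 (by omega)
          rw [h0] at hqk
          rw [← hqk, hq0]
        · exact h0
      have hcontact : ∃ j, j < k ∧
          ((∃ i, i < r+1 ∧ g i = e1 j) ∨ (∃ i, i < r+1 ∧ c i ∈ e1 j)) := by
        refine ⟨k-1, by omega, Or.inr ⟨0, by omega, ?_⟩⟩
        have h1 := (hnp.2.2.2 (k-1) (by omega)).2
        rw [show k-1+1 = k by omega] at h1
        rw [← hqk]
        exact h1
      obtain ⟨hjk, hjc⟩ := Nat.find_spec hcontact
      set j := Nat.find hcontact with hjdef
      have hminE : ∀ m, m < j → ∀ i, i < r+1 → g i ≠ e1 m := by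
        intro m hm i hi hc'
        exact Nat.find_min hcontact hm ⟨by omega, Or.inl ⟨i, hi, hc'⟩⟩
      have hminV : ∀ m, m < j → ∀ i, i < r+1 → c i ∉ e1 m := by
        intro m hm i hi hc'
        exact Nat.find_min hcontact hm ⟨by omega, Or.inr ⟨i, hi, hc'⟩⟩
      have hpre : ∀ m, m ≤ j → ∀ i, i < r+1 → p1 m ≠ c i := by
        intro m hm i hi hc'
        rcases Nat.eq_zero_or_pos m with h0 | h0
        · rw [h0, hq0] at hc'
          exact hvc i hi hc'.symm
        · have h1 := (hnp.2.2.2 (m-1) (by omega)).2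
          rw [show m-1+1 = m by omega] at h1
          rw [hc'] at h1
          exact hminV (m-1) (by omega) i hi h1
      by_cases hedge : ∃ i, i < r+1 ∧ g i = e1 j
      · -- contact via a cycle edge : wrap around the whole cycle
        obtain ⟨i₀, hi₀, hgE⟩ := hedge
        have hun := hgc.unroll (i₀+1) (by omega)
        have hcons := hun.cons (a := p1 j) (f := g i₀)
          (hgc.2.2.1 i₀ hi₀)
          (by rw [hgE]; exact (hnp.2.2.2 j hjk).1)
          ((hgc.2.2.2 i₀ hi₀).2)
          (fun b hb => hpre j le_rfl ((i₀+1+b) % (r+1))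
            (Nat.mod_lt _ (by omega)))
          (fun b hb hc' => by
            have h2 : (i₀ + (1+b)) % (r+1) = i₀ := by
              rw [← Nat.add_assoc]
              exact (hginj i₀ ((i₀+1+b) % (r+1)) (by omega)
                (by have := Nat.mod_lt (i₀+1+b) (show 0 < r+1 by omega); omega) hc').symm
            exact BergeAux.mod_shift_ne i₀ (1+b) (by omega) (by omega) (by omega) h2)
        rcases Nat.eq_zero_or_pos j with hj0 | hj0
        · apply finishL _ _ hcons
          show (if (0:ℕ) = 0 then p1 j else _) = v
          rw [if_pos rfl, hj0, hq0]
        · have hsp := hnp.splice (j-1) hcons (by omega)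
            (by
              show (if (0:ℕ) = 0 then p1 j else _) ∈ e1 (j-1)
              rw [if_pos rfl]
              have h1 := (hnp.2.2.2 (j-1) (by omega)).2
              rw [show j-1+1 = j by omega] at h1
              exact h1)
            (by
              intro a b ha hb
              by_cases hb0 : b = 0
              · show p1 a ≠ (if b = 0 then p1 j else _)
                rw [if_pos hb0]
                exact hnp.2.1 a j (by omega) (by omega)
              · show p1 a ≠ (if b = 0 then p1 j else c ((i₀+1+(b-1)) % (r+1)))
                rw [if_neg hb0]
                exact hpre a (by omega) _ (Nat.mod_lt _ (by omega)))
            (by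
              intro a b ha hb
              by_cases hb0 : b = 0
              · show e1 a ≠ (if b = 0 then g i₀ else _)
                rw [if_pos hb0]
                exact fun hc' => hminE a (by omega) i₀ hi₀ hc'.symm
              · show e1 a ≠ (if b = 0 then g i₀ else g ((i₀+1+(b-1)) % (r+1)))
                rw [if_neg hb0]
                exact fun hc' => hminE a (by omega) _ (Nat.mod_lt _ (by omega)) hc'.symm)
          apply finishL _ _ (hsp.trunc (by omega))
          show (if (0:ℕ) ≤ j-1 then p1 0 else _) = v
          rw [if_pos (Nat.zero_le _), hq0]
      · -- contact via a cycle vertex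
        have hvertex : ∃ i, i < r+1 ∧ c i ∈ e1 j := by
          rcases hjc with h | h
          · exact absurd h hedge
          · exact h
        obtain ⟨i₀, hi₀, hcE⟩ := hvertex
        have hun := hgc.unroll i₀ (by omega)
        have hsp := hnp.splice j hun hjk
          (by
            show c ((i₀ + 0) % (r+1)) ∈ e1 j
            rw [Nat.add_zero, Nat.mod_eq_of_lt hi₀]
            exact hcE)
          (by
            intro a b ha hb
            exact hpre a ha _ (Nat.mod_lt _ (by omega)))
          (by
            intro a b ha hb
            rcases Nat.lt_or_ge a j with haj | haj
            · exact fun hc' => hminE a haj _ (Nat.mod_lt _ (by omega)) hc'.symm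
            · have haj' : a = j := by omega
              intro hc'
              apply hedge
              exact ⟨(i₀+b) % (r+1), Nat.mod_lt _ (by omega), by rw [← haj', hc']⟩)
        apply finishL _ _ (hsp.trunc (by omega))
        show (if (0:ℕ) ≤ j then p1 0 else _) = v
        rw [if_pos (Nat.zero_le _), hq0]
  · -- a "good set" K exists, all of whose vertices start long paths
    by_cases hvK : v ∈ K
    · left
      obtain ⟨e, p, hp, h0, _, _⟩ := hK v hvK
      exact finishL _ _ hp h0
    · left
      obtain ⟨x₀, hx₀⟩ := hKne
      obtain ⟨k, ef, pf, hpath, hp0, hpl⟩ := hconn v x₀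
      obtain ⟨e1, p1, hnp, hq0, hqk⟩ := BergeAux.exists_nPath hpath
      rw [hp0] at hq0
      rw [hpl] at hqk
      have hk : 0 < k := by
        rcases Nat.eq_zero_or_pos k with h0 | h0
        · exfalso
          apply hvK
          rw [h0] at hqk
          rw [← hq0, hqk]
          exact hx₀
        · exact h0
      have hcontact : ∃ j, j < k ∧ ∃ y, y ∈ K ∧ y ∈ e1 j := by
        refine ⟨k-1, by omega, x₀, hx₀, ?_⟩
        have h1 := (hnp.2.2.2 (k-1) (by omega)).2
        rw [show k-1+1 = k by omega] at h1
        rw [← hqk]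
        exact h1
      obtain ⟨hjk, y, hyK, hye⟩ := Nat.find_spec hcontact
      set j := Nat.find hcontact with hjdef
      have hmin : ∀ m, m < j → ∀ z ∈ K, z ∉ e1 m := by
        intro m hm z hzK hze
        exact Nat.find_min hcontact hm ⟨by omega, z, hzK, hze⟩
      have hpre : ∀ m, m ≤ j → p1 m ∉ K := by
        intro m hm hmK
        rcases Nat.eq_zero_or_pos m with h0 | h0
        · rw [h0, hq0] at hmK
          exact hvK hmK
        · have h1 := (hnp.2.2.2 (m-1) (by omega)).2
          rw [show m-1+1 = m by omega] at h1
          exact hmin (m-1) (by omega) (p1 m) hmK h1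
      obtain ⟨e2, p2, hp2, h20, hmemK, hedgeK⟩ := hK y hyK
      have hsp := hnp.splice j hp2 hjk
        (by rw [h20]; exact hye)
        (by
          intro a b ha hb hc'
          exact hpre a ha (hc' ▸ hmemK b hb))
        (by
          intro a b ha hb hc'
          rcases Nat.lt_or_ge a j with haj | haj
          · exact hmin a haj (p2 b) (hmemK b (by omega)) (hc' ▸ (hp2.2.2.2 b hb).1)
          · have haj' : a = j := by omega
            apply hpre j le_rfl
            apply hedgeK b hb
            rw [← hc', haj']
            exact (hnp.2.2.2 j hjk).1)
      apply finishL _ _ (hsp.trunc (by omega))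
      show (if (0:ℕ) ≤ j then p1 0 else _) = v
      rw [if_pos (Nat.zero_le _), hq0]
end

section
/- Let r ≥ 2 and let H be a connected r-uniform hypergraph on n vertices with strictly more than n hyperedges. If H contains a Berge cycle of length r+1, then H contains a Berge path of length r+1. -/
/-!
The cycle cannot cover all vertices: otherwise there are only `r + 1` vertices and hence at most
`(r + 1).choose r = r + 1` hyperedges of size `r`. By connectivity some hyperedge `g` meets both a
vertex `w` off the cycle and a cycle vertex. Walking from `w` into the cycle through `g` and then
once around the cycle, omitting the one cycle edge adjacent to the entry point that could equal `g`,
gives a Berge path with `r + 1` edges.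
-/

section

variable {V : Type*} {H : Finset (Finset V)}

theorem isBergeCycle_succ_iff {n : ℕ} {e : Fin (n + 1) → Finset V} {c : Fin (n + 1) → V} :
    IsBergeCycle H (n + 1) e c ↔ Function.Injective e ∧ Function.Injective c ∧
      (∀ i, e i ∈ H) ∧ ∀ i, c i ∈ e i ∧ c (i + 1) ∈ e i := by
  have hsucc : ∀ i : Fin (n + 1),
      (⟨(i.val + 1) % (n + 1), Nat.mod_lt _ i.pos⟩ : Fin (n + 1)) = i + 1 := fun i => by
    ext; simp [Fin.val_add]
  simp only [IsBergeCycle, hsucc]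

theorem IsBergeCycle.isBergePath_rotate {n : ℕ} {e : Fin (n + 1) → Finset V}
    {c : Fin (n + 1) → V} (h : IsBergeCycle H (n + 1) e c) (m : Fin (n + 1)) :
    IsBergePath H n (fun i => e (i.castSucc + m)) (fun i => c (i + m)) := by
  obtain ⟨he, hc, hH, hmem⟩ := isBergeCycle_succ_iff.1 h
  refine ⟨he.comp ((add_left_injective m).comp (Fin.castSucc_injective n)),
    hc.comp (add_left_injective m), fun i => hH _, fun i => ⟨(hmem _).1, ?_⟩⟩
  have := (hmem (i.castSucc + m)).2
  rwa [add_right_comm, Fin.coeSucc_eq_succ] at this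

theorem IsBergePath.cons {k : ℕ} {e : Fin k → Finset V} {p : Fin (k + 1) → V}
    (h : IsBergePath H k e p) {g : Finset V} {w : V} (hg : g ∈ H) (hge : g ∉ Set.range e)
    (hwp : w ∉ Set.range p) (hw : w ∈ g) (hp : p 0 ∈ g) :
    IsBergePath H (k + 1) (Fin.cons g e) (Fin.cons w p) := by
  obtain ⟨he, hpinj, hH, hmem⟩ := h
  refine ⟨Fin.cons_injective_iff.2 ⟨hge, he⟩, Fin.cons_injective_iff.2 ⟨hwp, hpinj⟩,
    Fin.cases hg hH, Fin.cases ⟨hw, hp⟩ fun i => ?_⟩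
  simpa [← Fin.succ_castSucc] using hmem i

theorem IsBergeCycle.exists_isBergePath_of_mem {n : ℕ} {e : Fin (n + 1) → Finset V}
    {c : Fin (n + 1) → V} (h : IsBergeCycle H (n + 1) e c) {g : Finset V} {w : V} {t : Fin (n + 1)}
    (hg : g ∈ H) (hwc : w ∉ Set.range c) (hw : w ∈ g) (hct : c t ∈ g) :
    ∃ (e' : Fin (n + 1) → Finset V) (p : Fin (n + 2) → V), IsBergePath H (n + 1) e' p := by
  -- Enter the cycle at `m` so that the omitted edge `e (m - 1)` is the only one that may be `g`.
  obtain ⟨m, hcm, hgm⟩ : ∃ m, c m ∈ g ∧ ∀ i : Fin n, e (i.castSucc + m) ≠ g := by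
    by_cases hge : ∃ s, e s = g
    · obtain ⟨s, rfl⟩ := hge
      refine ⟨s + 1, ((isBergeCycle_succ_iff.1 h).2.2.2 s).2, fun i hi => ?_⟩
      have : i.castSucc + 1 = 0 := by
        simpa [← add_assoc, add_right_comm _ s] using h.1 hi
      exact Fin.succ_ne_zero i (Fin.coeSucc_eq_succ ▸ this)
    · exact ⟨t, hct, fun i hi => hge ⟨_, hi⟩⟩
  refine ⟨_, _, (h.isBergePath_rotate m).cons hg ?_ ?_ hw (by simpa using hcm)⟩
  · rintro ⟨i, hi⟩
    exact hgm i hi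
  · rintro ⟨i, rfl⟩
    exact hwc ⟨_, rfl⟩

theorem exists_notMem_range_of_card_lt {r : ℕ} [Fintype V] (huniform : ∀ f ∈ H, f.card = r)
    (hcard : Fintype.card V < H.card) {c : Fin (r + 1) → V} (hc : Function.Injective c) :
    ∃ w, w ∉ Set.range c := by
  classical
  by_contra! hsurj
  have hV : Fintype.card V = r + 1 := by
    rw [← Fintype.card_of_bijective ⟨hc, hsurj⟩, Fintype.card_fin]
  have hsub : H ⊆ Finset.univ.powersetCard r := fun f hf =>
    Finset.mem_powersetCard_univ.2 (huniform f hf)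
  have := Finset.card_le_card hsub
  rw [Finset.card_powersetCard, Finset.card_univ, hV, Nat.choose_succ_self_right] at this
  omega

theorem IsBergePath.exists_edge_crossing {k : ℕ} {e : Fin k → Finset V} {p : Fin (k + 1) → V}
    (h : IsBergePath H k e p) {S : Set V} (h0 : p 0 ∉ S) (hk : p (Fin.last k) ∈ S) :
    ∃ g ∈ H, ∃ x ∉ S, x ∈ g ∧ ∃ y ∈ S, y ∈ g := by
  obtain ⟨-, -, hH, hmem⟩ := h
  by_contra! hno
  refine Fin.induction (motive := fun i => p i ∉ S) h0 (fun i hi => ?_) (Fin.last k) hk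
  exact fun hi' => hno _ (hH i) _ hi (hmem i).1 _ hi' (hmem i).2

end

theorem berge_path_of_berge_cycle_general (V : Type*) [Fintype V] (r : ℕ)
    (H : Finset (Finset V))
    (huniform : ∀ f ∈ H, f.card = r)
    (hconn : HypergraphConnected H)
    (hcard : H.card > Fintype.card V)
    (hcycle : ∃ (e : Fin (r + 1) → Finset V) (c : Fin (r + 1) → V),
      IsBergeCycle H (r + 1) e c) :
    ∃ (e : Fin (r + 1) → Finset V) (p : Fin (r + 2) → V),
      IsBergePath H (r + 1) e p := by
  obtain ⟨e, c, hcyc⟩ := hcycle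
  obtain ⟨w, hw⟩ := exists_notMem_range_of_card_lt huniform hcard hcyc.2.1
  obtain ⟨k, ep, p, hp, hp0, hpk⟩ := hconn w (c 0)
  obtain ⟨g, hg, x, hx, hxg, _, ⟨t, rfl⟩, htg⟩ :=
    hp.exists_edge_crossing (S := Set.range c) (hp0 ▸ hw) (hpk ▸ ⟨0, rfl⟩)
  exact hcyc.exists_isBergePath_of_mem hg hx hxg htg

/-- In a connected `r`-uniform hypergraph on `n` vertices with more than `n`
hyperedges, a Berge cycle of length `r+1` yields a Berge path of length `r+1`. -/
theorem berge_path_of_berge_cycle (V : Type*) [Fintype V] (r : ℕ)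
    (hr : 2 ≤ r) (H : Finset (Finset V))
    (huniform : ∀ f ∈ H, f.card = r)
    (hconn : HypergraphConnected H)
    (hcard : H.card > Fintype.card V)
    (hcycle : ∃ (e : Fin (r + 1) → Finset V) (c : Fin (r + 1) → V),
      IsBergeCycle H (r + 1) e c) :
    ∃ (e : Fin (r + 1) → Finset V) (p : Fin (r + 2) → V),
      IsBergePath H (r + 1) e p :=
  berge_path_of_berge_cycle_general V r H huniform hconn hcard hcycle
end

section
/- Let G be a connected (simple) graph on n vertices with at least n edges. Then for every vertex v of G, either there exists a path of length 3 in G starting at v, or there exists a triangle in G containing v. -/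
/-!
If `v` starts no path of length 3 and lies on no triangle, then every vertex is within distance
2 of `v`, no edge joins two vertices at the same distance from `v`, and every vertex has at most
one neighbour closer to `v`. Hence each edge is determined by its endpoint farther from `v`,
which is never `v` itself, so there are at most `n - 1` edges.
-/

open Finset

namespace SimpleGraph

variable {V : Type*} {G : SimpleGraph V} {u v w : V}

def StartsPathOfLengthThree (G : SimpleGraph V) (v : V) : Prop :=
  ∃ u₁ u₂ u₃ : V, G.Adj v u₁ ∧ G.Adj u₁ u₂ ∧ G.Adj u₂ u₃ ∧
    v ≠ u₁ ∧ v ≠ u₂ ∧ v ≠ u₃ ∧ u₁ ≠ u₂ ∧ u₁ ≠ u₃ ∧ u₂ ≠ u₃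

def LiesOnTriangle (G : SimpleGraph V) (v : V) : Prop :=
  ∃ a b : V, G.Adj v a ∧ G.Adj v b ∧ G.Adj a b

theorem startsPathOfLengthThree_of_adj {u₁ u₂ u₃ : V} (h₁ : G.Adj v u₁) (h₂ : G.Adj u₁ u₂)
    (h₃ : G.Adj u₂ u₃) (hv₂ : v ≠ u₂) (hv₃ : v ≠ u₃) (h₁₃ : u₁ ≠ u₃) :
    G.StartsPathOfLengthThree v :=
  ⟨u₁, u₂, u₃, h₁, h₂, h₃, h₁.ne, hv₂, hv₃, h₂.ne, h₁₃, h₃.ne⟩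

theorem Walk.IsPath.startsPathOfLengthThree {p : G.Walk v w} (hp : p.IsPath)
    (hlen : 3 ≤ p.length) : G.StartsPathOfLengthThree v := by
  have hne : ∀ i j, i ≤ 3 → j ≤ 3 → i ≠ j → p.getVert i ≠ p.getVert j := fun i j hi hj hij h ↦
    hij (hp.getVert_injOn (by simp only [Set.mem_ofPred_eq]; omega)
      (by simp only [Set.mem_ofPred_eq]; omega) h)
  rw [← p.getVert_zero]
  exact startsPathOfLengthThree_of_adj (p.adj_getVert_succ (by omega))
    (p.adj_getVert_succ (by omega)) (p.adj_getVert_succ (by omega))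
    (hne 0 2 (by omega) (by omega) (by omega)) (hne 0 3 (by omega) (by omega) (by omega))
    (hne 1 3 (by omega) (by omega) (by omega))

theorem exists_adj_adj_of_dist_eq_two (h : G.dist u v = 2) : ∃ x, G.Adj u x ∧ G.Adj x v := by
  have hreach : G.Reachable u v := Reachable.of_dist_ne_zero (by omega)
  have hedist : G.edist u v = 2 := by rw [← hreach.coe_dist_eq_edist, h]; rfl
  obtain ⟨x, hx⟩ := (edist_eq_two_iff.mp hedist).2.2
  exact ⟨x, (G.mem_commonNeighbors.mp hx).1, (G.mem_commonNeighbors.mp hx).2.symm⟩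

theorem card_edgeFinset_lt_card_of_subsingleton_lower_neighbors [Fintype V] [Nonempty V]
    [DecidableRel G.Adj] {α : Type*} [LinearOrder α] (f : V → α)
    (hf : ∀ a b, G.Adj a b → f a ≠ f b)
    (hlower : ∀ a a' b, G.Adj a b → G.Adj a' b → f a < f b → f a' < f b → a = a') :
    #G.edgeFinset < Fintype.card V := by
  classical
  obtain ⟨m, -, hm⟩ := exists_min_image univ f univ_nonempty
  suffices #G.edgeFinset ≤ #(univ.erase m) by
    rwa [card_erase_of_mem (mem_univ m), card_univ,
      Nat.le_sub_one_iff_lt Fintype.card_pos] at this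
  -- Charge each edge to its endpoint of larger label; `m` is never charged.
  refine card_le_card_of_forall_subsingleton (fun e b ↦ b ∈ e ∧ ∀ a ∈ e, f a ≤ f b) ?_ ?_
  · intro e he
    induction e using Sym2.ind with
    | _ x y =>
      have hxy : G.Adj x y := mem_edgeFinset.mp he
      wlog hle : f x ≤ f y generalizing x y
      · obtain ⟨b, hb, hbe⟩ := this y x (by simpa [Sym2.eq_swap] using he) hxy.symm
          (le_of_not_ge hle)
        exact ⟨b, hb, by simpa [Sym2.eq_swap] using hbe⟩
      refine ⟨y, mem_erase.mpr ⟨?_, mem_univ y⟩, Sym2.mem_mk_right x y, ?_⟩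
      · rintro rfl
        exact hf x y hxy (le_antisymm hle (hm x (mem_univ x)))
      · simp [hle]
  · intro b _ e ⟨he, hbe, hfe⟩ e' ⟨he', hbe', hfe'⟩
    obtain ⟨a, rfl⟩ := Sym2.mem_iff_exists.mp hbe
    obtain ⟨a', rfl⟩ := Sym2.mem_iff_exists.mp hbe'
    have hab : G.Adj b a := mem_edgeFinset.mp he
    have hab' : G.Adj b a' := mem_edgeFinset.mp he'
    have := hlower a a' b hab.symm hab'.symm
      ((hfe a (Sym2.mem_mk_right b a)).lt_of_ne (hf b a hab).symm)
      ((hfe' a' (Sym2.mem_mk_right b a')).lt_of_ne (hf b a' hab').symm)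
    rw [this]

theorem Connected.dist_le_two_of_not_startsPathOfLengthThree (hconn : G.Connected)
    (hpath : ¬ G.StartsPathOfLengthThree v) (w : V) : G.dist v w ≤ 2 := by
  obtain ⟨p, hp, hlen⟩ := hconn.exists_path_of_dist v w
  by_contra! h
  exact hpath (hp.startsPathOfLengthThree (by omega))

theorem Connected.dist_ne_dist_of_adj (hconn : G.Connected)
    (hpath : ¬ G.StartsPathOfLengthThree v) (htri : ¬ G.LiesOnTriangle v) {a b : V}
    (hab : G.Adj a b) : G.dist v a ≠ G.dist v b := by
  intro heq
  have hle := hconn.dist_le_two_of_not_startsPathOfLengthThree hpath a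
  obtain h0 | h1 | h2 : G.dist v a = 0 ∨ G.dist v a = 1 ∨ G.dist v a = 2 := by omega
  · have ha : v = a := hconn.dist_eq_zero_iff.mp h0
    have hb : v = b := hconn.dist_eq_zero_iff.mp (heq ▸ h0)
    exact hab.ne (ha.symm.trans hb)
  · exact htri ⟨a, b, dist_eq_one_iff_adj.mp h1, dist_eq_one_iff_adj.mp (heq ▸ h1), hab⟩
  · obtain ⟨x, hvx, hxa⟩ := exists_adj_adj_of_dist_eq_two h2
    refine hpath (startsPathOfLengthThree_of_adj hvx hxa hab ?_ ?_ ?_)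
    · rintro rfl
      simp at h2
    · intro hvb
      rw [← hvb, dist_self] at heq
      omega
    · rintro rfl
      rw [heq, dist_eq_one_iff_adj.mpr hvx] at h2
      omega

theorem Connected.eq_of_adj_of_dist_lt (hconn : G.Connected)
    (hpath : ¬ G.StartsPathOfLengthThree v) {a a' b : V} (ha : G.Adj a b) (ha' : G.Adj a' b)
    (hlt : G.dist v a < G.dist v b) (hlt' : G.dist v a' < G.dist v b) : a = a' := by
  have hle := hconn.dist_le_two_of_not_startsPathOfLengthThree hpath b
  have hstep := ha.diff_dist_adj (u := v)
  have hstep' := ha'.diff_dist_adj (u := v)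
  obtain h1 | h2 : G.dist v b = 1 ∨ G.dist v b = 2 := by omega
  · have hva : v = a := hconn.dist_eq_zero_iff.mp (by omega)
    have hva' : v = a' := hconn.dist_eq_zero_iff.mp (by omega)
    exact hva.symm.trans hva'
  · by_contra hne
    have hva : G.Adj v a := dist_eq_one_iff_adj.mp (by omega)
    have hva' : G.Adj v a' := dist_eq_one_iff_adj.mp (by omega)
    refine hpath (startsPathOfLengthThree_of_adj hva ha ha'.symm ?_ hva'.ne hne)
    rintro rfl
    simp at h2

end SimpleGraph

/-- Base case `r = 2`: in a connected simple graph on `n` vertices with at least `n`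
edges, every vertex `v` either starts a path of length 3 (four distinct vertices with
consecutive ones adjacent) or lies in a triangle. -/
theorem graph_path_or_triangle_from_every_vertex (V : Type*) [Fintype V]
    (G : SimpleGraph V) [DecidableRel G.Adj]
    (hconn : G.Connected)
    (hcard : G.edgeFinset.card ≥ Fintype.card V) :
    ∀ v : V,
      (∃ u₁ u₂ u₃ : V, G.Adj v u₁ ∧ G.Adj u₁ u₂ ∧ G.Adj u₂ u₃ ∧
        v ≠ u₁ ∧ v ≠ u₂ ∧ v ≠ u₃ ∧ u₁ ≠ u₂ ∧ u₁ ≠ u₃ ∧ u₂ ≠ u₃) ∨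
      (∃ a b : V, G.Adj v a ∧ G.Adj v b ∧ G.Adj a b) := by
  intro v
  by_contra h
  obtain ⟨hpath, htri⟩ := not_or.mp h
  have : Nonempty V := ⟨v⟩
  have := G.card_edgeFinset_lt_card_of_subsingleton_lower_neighbors (G.dist v)
    (fun _ _ ↦ hconn.dist_ne_dist_of_adj hpath htri)
    (fun _ _ _ ↦ hconn.eq_of_adj_of_dist_lt hpath)
  omega
end

section
/- Let r ≥ 2 and let n be a multiple of r+1. Then there exists an r-uniform hypergraph on n vertices with exactly n hyperedges containing no Berge path of length r+1; namely, the disjoint union of n/(r+1) complete r-uniform hypergraphs each on r+1 vertices. -/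
private lemma div_eq_iff'' {k : ℕ} (hk : 0 < k) (a c : ℕ) :
    a / k = c ↔ c * k ≤ a ∧ a < (c + 1) * k := by
  rw [← Nat.le_div_iff_mul_le hk, ← Nat.div_lt_iff_lt_mul hk]
  omega

private lemma block_card {r n c : ℕ} (hc : (c + 1) * (r + 1) ≤ n) :
    (Finset.univ.filter fun y : Fin n => y.val / (r + 1) = c).card = r + 1 := by
  have hinj : Set.InjOn Fin.val
      ((Finset.univ.filter fun y : Fin n => y.val / (r + 1) = c) : Set (Fin n)) :=
    fun a _ b _ h => Fin.val_injective h
  rw [← Finset.card_image_of_injOn hinj]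
  have : (Finset.univ.filter fun y : Fin n => y.val / (r + 1) = c).image Fin.val
      = Finset.Ico (c * (r + 1)) ((c + 1) * (r + 1)) := by
    ext a
    simp only [Finset.mem_image, Finset.mem_filter, Finset.mem_univ, true_and,
      Finset.mem_Ico]
    constructor
    · rintro ⟨y, hy, rfl⟩
      exact (div_eq_iff'' (by omega) _ _).mp hy
    · intro ha
      exact ⟨⟨a, by omega⟩, (div_eq_iff'' (by omega) _ _).mpr ha, rfl⟩
  rw [this, Nat.card_Ico]
  ring_nf
  omega


/-- Lower bound construction: for `r ≥ 2` and `(r+1) ∣ n`, the disjoint union of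
`n/(r+1)` complete `r`-uniform hypergraphs on `r+1` vertices each (here: all
`r`-subsets of `Fin n` lying inside a single block `{j(r+1), …, j(r+1)+r}`) is an
`r`-uniform hypergraph on `n` vertices with exactly `n` hyperedges and no Berge path
of length `r+1`. -/
theorem disjoint_complete_hypergraphs_extremal (r n : ℕ) (hr : 2 ≤ r)
    (hn : (r + 1) ∣ n) :
    ∀ H : Finset (Finset (Fin n)),
      H = Finset.univ.filter (fun f : Finset (Fin n) =>
        f.card = r ∧ ∀ x ∈ f, ∀ y ∈ f, x.val / (r + 1) = y.val / (r + 1)) →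
      (∀ f ∈ H, f.card = r) ∧ H.card = n ∧
        ¬ ∃ (e : Fin (r + 1) → Finset (Fin n)) (v : Fin (r + 2) → Fin n),
          IsBergePath H (r + 1) e v := by
  obtain ⟨m, hm⟩ := hn
  have hm' : n = m * (r + 1) := by rw [hm]; ring
  rintro H rfl
  -- block bound: for any x : Fin n, ((x.val/(r+1))+1)*(r+1) ≤ n
  have hbb : ∀ x : Fin n, (x.val / (r + 1) + 1) * (r + 1) ≤ n := by
    intro x
    have hx : x.val < n := x.isLt
    have h1 : x.val / (r + 1) < m := by
      rw [Nat.div_lt_iff_lt_mul (by omega)]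
      omega
    calc (x.val / (r + 1) + 1) * (r + 1) ≤ m * (r + 1) := by
          exact Nat.mul_le_mul_right _ h1
      _ = n := by omega
  refine ⟨?_, ?_, ?_⟩
  · intro f hf
    exact ((Finset.mem_filter.mp hf).2).1
  · -- cardinality
    set φ : Fin n → Finset (Fin n) := fun x =>
      (Finset.univ.filter fun y : Fin n => y.val / (r + 1) = x.val / (r + 1)).erase x
      with hφ
    have hxblock : ∀ x : Fin n,
        x ∈ Finset.univ.filter fun y : Fin n => y.val / (r + 1) = x.val / (r + 1) := by
      intro x; simp
    have hφcard : ∀ x, (φ x).card = r := by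
      intro x
      rw [hφ]
      rw [Finset.card_erase_of_mem (hxblock x), block_card (hbb x)]
      omega
    have hφmem : ∀ y x : Fin n, y ∈ φ x ↔ y ≠ x ∧ y.val / (r + 1) = x.val / (r + 1) := by
      intro y x
      simp [hφ, Finset.mem_erase]
    have hφinj : Function.Injective φ := by
      intro x x' h
      obtain ⟨y, hy⟩ := Finset.card_pos.mp (by rw [hφcard]; omega : 0 < (φ x).card)
      have hy' : y ∈ φ x' := h ▸ hy
      have hq : x.val / (r + 1) = x'.val / (r + 1) :=
        (((hφmem y x).mp hy).2).symm.trans (((hφmem y x').mp hy').2)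
      by_contra hne
      have : x ∈ φ x' := (hφmem x x').mpr ⟨hne, hq⟩
      rw [← h] at this
      exact ((hφmem x x).mp this).1 rfl
    have himg : Finset.univ.image φ =
        Finset.univ.filter (fun f : Finset (Fin n) =>
          f.card = r ∧ ∀ x ∈ f, ∀ y ∈ f, x.val / (r + 1) = y.val / (r + 1)) := by
      ext f
      simp only [Finset.mem_image, Finset.mem_univ, true_and, Finset.mem_filter]
      constructor
      · rintro ⟨x, rfl⟩
        refine ⟨hφcard x, fun a ha b hb => ?_⟩
        rw [((hφmem a x).mp ha).2, ((hφmem b x).mp hb).2]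
      · rintro ⟨hcard, hsame⟩
        have hfne : f.Nonempty := Finset.card_pos.mp (by omega)
        obtain ⟨z, hz⟩ := hfne
        set B := Finset.univ.filter fun y : Fin n => y.val / (r + 1) = z.val / (r + 1)
          with hB
        have hfB : f ⊆ B := by
          intro a ha
          simp only [hB, Finset.mem_filter, Finset.mem_univ, true_and]
          exact hsame a ha z hz
        have hBcard : B.card = r + 1 := block_card (hbb z)
        have hsd : (B \ f).card = 1 := by
          rw [Finset.card_sdiff_of_subset hfB, hBcard, hcard]; omega
        obtain ⟨x, hx⟩ := Finset.card_eq_one.mp hsd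
        have hxB : x ∈ B := (Finset.mem_sdiff.mp (hx ▸ Finset.mem_singleton_self x)).1
        have hxf : x ∉ f := (Finset.mem_sdiff.mp (hx ▸ Finset.mem_singleton_self x)).2
        refine ⟨x, ?_⟩
        have hqx : x.val / (r + 1) = z.val / (r + 1) := by
          simpa [hB] using hxB
        have hfsub : f ⊆ φ x := by
          intro a ha
          refine (hφmem a x).mpr ⟨fun h => hxf (h ▸ ha), ?_⟩
          rw [hsame a ha z hz, hqx]
        exact (Finset.eq_of_subset_of_card_le hfsub (by rw [hφcard, hcard])).symm
    rw [← himg, Finset.card_image_of_injective _ hφinj, Finset.card_univ,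
      Fintype.card_fin]
  · -- no Berge path of length r+1
    rintro ⟨e, v, he_inj, hv_inj, heH, hev⟩
    have hedge_same : ∀ i : Fin (r + 1), ∀ x ∈ e i, ∀ y ∈ e i,
        x.val / (r + 1) = y.val / (r + 1) := by
      intro i
      exact ((Finset.mem_filter.mp (heH i)).2).2
    have hchain : ∀ i : Fin (r + 2), (v i).val / (r + 1) = (v 0).val / (r + 1) := by
      intro i
      induction i using Fin.induction with
      | zero => rfl
      | succ j ih =>
        have h1 := (hev j).1
        have h2 := (hev j).2
        rw [← ih]
        exact hedge_same j _ h2 _ h1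
    set c := (v 0).val / (r + 1) with hc
    have hmap : Function.Injective (fun i : Fin (r + 2) =>
        (⟨(v i).val % (r + 1), Nat.mod_lt _ (by omega)⟩ : Fin (r + 1))) := by
      intro i j h
      simp only [Fin.mk.injEq] at h
      have hi := hchain i
      have hj := hchain j
      have : (v i).val = (v j).val := by
        have e1 := Nat.div_add_mod (v i).val (r + 1)
        have e2 := Nat.div_add_mod (v j).val (r + 1)
        rw [hi] at e1
        rw [hj] at e2
        omega
      exact hv_inj (Fin.val_injective this)
    have := Fintype.card_le_of_injective _ hmap
    simp only [Fintype.card_fin] at this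
    omega
end

section
/- Let r ≥ 2 and let H be a hypergraph containing a Berge cycle of length r+1 with vertices v_1,…,v_{r+1} and edges e_1,…,e_{r+1}, and suppose some vertex u of the set e_1 ∪ ⋯ ∪ e_{r+1} spanned by the cycle's edges satisfies u ∉ {v_1,…,v_{r+1}}. Then H contains a Berge path of length r+1 starting at u. -/
/-- If a Berge cycle of length `r+1` spans a vertex `u` that is not one of the
cycle's vertices, then there is a Berge path of length `r+1` starting at `u`. -/
theorem berge_path_from_spanned_vertex (V : Type*) (r : ℕ) (hr : 2 ≤ r)
    (H : Finset (Finset V))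
    (e : Fin (r + 1) → Finset V) (w : Fin (r + 1) → V)
    (hcycle : IsBergeCycle H (r + 1) e w)
    (u : V) (hu : ∃ i, u ∈ e i) (hunot : ∀ i, w i ≠ u) :
    ∃ (e' : Fin (r + 1) → Finset V) (p : Fin (r + 2) → V),
      IsBergePath H (r + 1) e' p ∧ p 0 = u := by

  obtain ⟨einj, winj, emem, hcyc⟩ := hcycle
  obtain ⟨j, hj⟩ := hu
  have hpos : 0 < r + 1 := Nat.succ_pos r
  have hcyc' : ∀ i : Fin (r + 1), w i ∈ e i ∧ w (i + 1) ∈ e i := by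
    intro i
    have h := hcyc i
    have : (⟨(i.val + 1) % (r + 1), Nat.mod_lt _ i.pos⟩ : Fin (r + 1)) = i + 1 := by
      apply Fin.ext
      simp only [Fin.val_add, Fin.val_one', Nat.one_mod_eq_one.mpr (by omega : r + 1 ≠ 1)]
    rwa [this] at h
  refine ⟨fun i => e (j + i),
    fun i => if h : i.val = 0 then u
      else w (j + ⟨i.val % (r + 1), Nat.mod_lt _ hpos⟩), ⟨?_, ?_, ?_, ?_⟩, ?_⟩
  · exact einj.comp fun a b hab => by simpa using add_right_injective j hab
  · intro a b hab
    simp only at hab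
    by_cases ha : a.val = 0 <;> by_cases hb : b.val = 0
    · exact Fin.ext (by omega)
    · rw [dif_pos ha, dif_neg hb] at hab
      exact absurd hab.symm (hunot _)
    · rw [dif_neg ha, dif_pos hb] at hab
      exact absurd hab (hunot _)
    · rw [dif_neg ha, dif_neg hb] at hab
      have := winj hab
      have := add_right_injective j this
      have hmod : a.val % (r + 1) = b.val % (r + 1) := Fin.mk.inj_iff.mp this
      have ha2 := a.isLt
      have hb2 := b.isLt
      apply Fin.ext
      rcases Nat.lt_or_ge a.val (r + 1) with h1 | h1 <;>
        rcases Nat.lt_or_ge b.val (r + 1) with h2 | h2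
      · rwa [Nat.mod_eq_of_lt h1, Nat.mod_eq_of_lt h2] at hmod
      · have : b.val = r + 1 := by omega
        rw [Nat.mod_eq_of_lt h1, this, Nat.mod_self] at hmod
        omega
      · have : a.val = r + 1 := by omega
        rw [Nat.mod_eq_of_lt h2, this, Nat.mod_self] at hmod
        omega
      · omega
  · intro i; exact emem _
  · intro i
    constructor
    · by_cases h : (i.castSucc : Fin (r + 2)).val = 0
      · simp only [dif_pos h]
        have : i = 0 := Fin.ext (by simpa using h)
        subst this
        simpa using hj
      · simp only [dif_neg h]
        have hval : (i.castSucc : Fin (r + 2)).val = i.val := rfl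
        have hi : (⟨(i.castSucc : Fin (r + 2)).val % (r + 1), Nat.mod_lt _ hpos⟩ : Fin (r + 1)) = i := by
          apply Fin.ext
          simp [hval, Nat.mod_eq_of_lt i.isLt]
        rw [hi]
        exact (hcyc' (j + i)).1
    · have h : (i.succ : Fin (r + 2)).val ≠ 0 := by simp
      simp only [dif_neg h]
      have hi : (⟨(i.succ : Fin (r + 2)).val % (r + 1), Nat.mod_lt _ hpos⟩ : Fin (r + 1)) = i + 1 := by
        apply Fin.ext
        simp only [Fin.val_succ, Fin.val_add, Fin.val_one', Nat.one_mod_eq_one.mpr (by omega : r + 1 ≠ 1)]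
      rw [hi, ← add_assoc]
      exact (hcyc' (j + i)).2
  · simp
end
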